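/- arXiv:math/9604201 — 5 statements merged into one kernel-verified Lean document; each statement's English description precedes it below -/
import Mathlib

section
/- For the special case f(σ) = σ^s with s a negative integer, the only holomorphic function g on D, Hölder continuous up to the boundary, such that g(σ)σ^{-s} is real for all σ on the unit circle, is g = 0. -/
open Complex Metric
open scoped NNReal

/-- for `s < 0`, the only holomorphic function `g` on the disc, Hölder
continuous up to the boundary, such that `g(σ)·σ^{-s}` is real on the unit circle,
is `g = 0`. -/
theorem stmt_2 (α : ℝ≥0) (hα0 : 0 < α) (hα1 : (α : ℝ) < 1)
    (s : ℤ) (hs : s < 0) (g : ℂ → ℂ)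
    (hgc : ContinuousOn g (closedBall 0 1))
    (hgh : DifferentiableOn ℂ g (ball 0 1))
    (hgH : ∃ C, HolderOnWith C α g (closedBall 0 1))
    (hreal : ∀ σ ∈ sphere (0:ℂ) 1, ∃ r : ℝ, g σ * σ ^ (-s) = (r : ℂ)) :
    ∀ z ∈ closedBall (0:ℂ) 1, g z = 0 := by
  set n : ℕ := (-s).toNat with hn
  have hn0 : 0 < n := by omega
  have hns : (-s : ℤ) = (n : ℤ) := by omega
  set h : ℂ → ℂ := fun z => g z * z ^ n with hh
  have hcl : closure (ball (0:ℂ) 1) = closedBall 0 1 := closure_ball 0 one_ne_zero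
  have hfr : frontier (ball (0:ℂ) 1) = sphere 0 1 := frontier_ball 0 one_ne_zero
  have hhd : DifferentiableOn ℂ h (ball 0 1) :=
    hgh.mul (differentiable_pow n).differentiableOn
  have hhc : ContinuousOn h (closedBall 0 1) :=
    hgc.mul (continuous_pow n).continuousOn
  have hhcl : DiffContOnCl ℂ h (ball 0 1) := ⟨hhd, by rwa [hcl]⟩
  -- boundary values of h are real
  have hbd : ∀ σ ∈ sphere (0:ℂ) 1, (h σ).im = 0 := by
    intro σ hσ
    obtain ⟨r, hr⟩ := hreal σ hσ
    rw [hns, zpow_natCast] at hr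
    rw [hh]; simp only []
    rw [hr]; simp
  -- Im h = 0 on closed ball, by maximum modulus on exp(±I h)
  have him : ∀ z ∈ closedBall (0:ℂ) 1, (h z).im = 0 := by
    intro z hz
    have hz' : z ∈ closure (ball (0:ℂ) 1) := by rwa [hcl]
    have key : ∀ c : ℂ, c = I ∨ c = -I → ‖Complex.exp (c * h z)‖ ≤ 1 := by
      intro c hc
      have hdc : DiffContOnCl ℂ (fun w => Complex.exp (c * h w)) (ball 0 1) :=
        ⟨(hhd.const_mul c).cexp, by
          rw [hcl]; exact ((hhc.const_smul c).cexp : ContinuousOn _ _)⟩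
      refine Complex.norm_le_of_forall_mem_frontier_norm_le isBounded_ball hdc ?_ hz'
      intro w hw
      rw [hfr] at hw
      rcases hc with rfl | rfl <;>
        simp [Complex.norm_exp, hbd w hw]
    have h1 := key I (Or.inl rfl)
    have h2 := key (-I) (Or.inr rfl)
    rw [Complex.norm_exp, Real.exp_le_one_iff] at h1 h2
    simp [Complex.mul_re] at h1 h2
    linarith
  -- h is constant on ball by open mapping theorem, hence h = 0 on ball
  have hana : AnalyticOnNhd ℂ h (ball 0 1) := hhd.analyticOnNhd isOpen_ball
  have hconst := hana.is_constant_or_isOpen (convex_ball _ _).isPreconnected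
  have hzero : ∀ z ∈ ball (0:ℂ) 1, h z = 0 := by
    rcases hconst with ⟨w, hw⟩ | hop
    · intro z hz
      have h0 : h 0 = 0 := by simp [hh, hn0.ne']
      rw [hw z hz, ← hw 0 (mem_ball_self one_pos), h0]
    · exfalso
      have := hop (ball 0 1) subset_rfl isOpen_ball
      have hmem : h 0 ∈ h '' ball 0 1 := ⟨0, mem_ball_self one_pos, rfl⟩
      obtain ⟨ε, hε, hball⟩ := Metric.isOpen_iff.1 this _ hmem
      have hmem2 : h 0 + ((ε / 2 : ℝ) : ℂ) * I ∈ h '' ball 0 1 := by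
        apply hball
        rw [mem_ball, dist_eq_norm]
        have heq : h 0 + ((ε/2:ℝ):ℂ)*I - h 0 = ((ε/2:ℝ):ℂ)*I := by ring
        rw [heq, norm_mul, Complex.norm_I, mul_one, Complex.norm_real,
          Real.norm_eq_abs, abs_of_pos (by linarith : (0:ℝ) < ε/2)]
        linarith
      obtain ⟨w, hw, hweq⟩ := hmem2
      have : (h w).im = 0 := him w (ball_subset_closedBall hw)
      have h0im : (h 0).im = 0 := him 0 (mem_closedBall_self zero_le_one)
      rw [hweq] at this
      simp [h0im] at this
      linarith
  -- g = 0 on ball \ {0}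
  have hg0 : Set.EqOn g 0 (ball (0:ℂ) 1 \ {0}) := by
    rintro z ⟨hz, hz0⟩
    have := hzero z hz
    have hzpow : z ^ n ≠ 0 := pow_ne_zero n (by simpa using hz0)
    simpa [hh, hzpow] using this
  -- extend to closed ball by continuity
  have hsub1 : closure (ball (0:ℂ) 1 \ {0}) ⊆ closedBall 0 1 := by
    rw [← hcl]; exact closure_mono Set.diff_subset
  have hsub2 : closedBall (0:ℂ) 1 ⊆ closure (ball (0:ℂ) 1 \ {0}) := by
    rw [← hcl]
    refine closure_minimal ?_ isClosed_closure
    have hd : ball (0:ℂ) 1 ⊆ closure (ball (0:ℂ) 1 ∩ {0}ᶜ) :=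
      (dense_compl_singleton (0:ℂ)).open_subset_closure_inter isOpen_ball
    intro x hx
    exact closure_mono (by intro y hy; exact ⟨hy.1, hy.2⟩) (hd hx)
  have hsub0 : ball (0:ℂ) 1 \ {0} ⊆ closedBall 0 1 :=
    Set.diff_subset.trans ball_subset_closedBall
  have := hg0.of_subset_closure hgc continuousOn_const hsub0 hsub2
  intro z hz
  exact this hz
end

section
/- For s a nonnegative integer, the real vector space of holomorphic functions g on D, continuous up to the boundary, such that g(σ)σ^{-s} is real on the unit circle, has the basis {σ^s(σ^j + σ^{-j}), i·σ^s(σ^j − σ^{-j}) : 0 ≤ j ≤ s}, and hence real dimension 2s+1. -/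
open Complex Metric MeasureTheory intervalIntegral Finset NNReal Polynomial

noncomputable section StmtAux

def fourC (g : ℂ → ℂ) (m : ℤ) : ℂ :=
  ∫ θ in (0:ℝ)..(2*Real.pi), Complex.exp (-(m:ℂ) * θ * I) * g (Complex.exp (θ * I))

lemma intervalIntegral_conj {f : ℝ → ℂ} {a b : ℝ} :
    (∫ x in a..b, (starRingEnd ℂ) (f x)) = (starRingEnd ℂ) (∫ x in a..b, f x) := by
  simp [intervalIntegral, ← integral_conj]

lemma circ_inv_to_fourC (g : ℂ → ℂ) (n : ℕ) :
    (∮ z in C(0, 1), (z - 0)⁻¹ ^ n • (z - 0)⁻¹ • g z) = I * fourC g n := by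
  rw [circleIntegral, fourC, ← intervalIntegral.integral_const_mul]
  refine intervalIntegral.integral_congr fun θ _ => ?_
  simp only [deriv_circleMap, circleMap_zero, Complex.ofReal_one, one_mul, smul_eq_mul, sub_zero]
  rw [← Complex.exp_neg, ← Complex.exp_nat_mul]
  have h : Complex.exp (↑θ*I) * Complex.exp ((n:ℂ) * -(↑θ*I)) * Complex.exp (-(↑θ*I))
      = Complex.exp (-((n:ℤ):ℂ)*θ*I) := by
    rw [← Complex.exp_add, ← Complex.exp_add]; congr 1; push_cast; ring
  linear_combination (I * g (Complex.exp (↑θ * I))) * h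

lemma circ_pow_to_fourC (g : ℂ → ℂ) (m : ℕ) :
    (∮ z in C(0, 1), z ^ m • g z) = I * fourC g (-(m+1)) := by
  rw [circleIntegral, fourC, ← intervalIntegral.integral_const_mul]
  refine intervalIntegral.integral_congr fun θ _ => ?_
  simp only [deriv_circleMap, circleMap_zero, Complex.ofReal_one, one_mul, smul_eq_mul]
  rw [← Complex.exp_nat_mul]
  have h : Complex.exp (↑θ*I) * Complex.exp ((m:ℂ) * (↑θ*I))
      = Complex.exp (-((-(m+1):ℤ):ℂ)*θ*I) := by
    rw [← Complex.exp_add]; congr 1; push_cast; ring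
  linear_combination (I * g (Complex.exp (↑θ * I))) * h

lemma fourC_conj (g : ℂ → ℂ) (s : ℕ)
    (hb : ∀ σ ∈ sphere (0:ℂ) 1, ∃ r : ℝ, g σ = (r:ℝ) * σ ^ s) (n : ℤ) :
    fourC g n = (starRingEnd ℂ) (fourC g (2*s - n)) := by
  rw [fourC, fourC, ← intervalIntegral_conj]
  refine intervalIntegral.integral_congr fun θ _ => ?_
  have hσ : Complex.exp (↑θ * I) ∈ sphere (0:ℂ) 1 := by
    simp [mem_sphere_zero_iff_norm, Complex.norm_exp_ofReal_mul_I]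
  obtain ⟨r, hr⟩ := hb _ hσ
  rw [hr, map_mul, map_mul, ← Complex.exp_conj, map_pow, ← Complex.exp_conj,
    Complex.conj_ofReal]
  have h1 : (starRingEnd ℂ) (-((2*(s:ℤ) - n : ℤ):ℂ) * ↑θ * I) = ((2*(s:ℤ) - n : ℤ):ℂ) * ↑θ * I := by
    simp [Complex.conj_I, map_ofNat, Complex.conj_ofReal]; ring
  have h2 : (starRingEnd ℂ) ((θ:ℂ) * I) = -(↑θ * I) := by
    simp [Complex.conj_I, Complex.conj_ofReal]
  rw [h1, h2]
  rw [← Complex.exp_nat_mul, ← Complex.exp_nat_mul]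
  have h : Complex.exp (-(n:ℂ)*θ*I) * Complex.exp ((s:ℂ) * (↑θ*I))
      = Complex.exp (((2*(s:ℤ) - n : ℤ):ℂ)*θ*I) * Complex.exp ((s:ℂ) * -(↑θ*I)) := by
    rw [← Complex.exp_add, ← Complex.exp_add]; congr 1; push_cast; ring
  linear_combination (r:ℂ) * h

lemma fourC_neg (g : ℂ → ℂ) (hc : ContinuousOn g (closedBall 0 1))
    (hd : DifferentiableOn ℂ g (ball 0 1)) (m : ℤ) (hm : m < 0) : fourC g m = 0 := by
  obtain ⟨k, rfl⟩ : ∃ k : ℕ, m = -((k:ℤ)+1) := ⟨(-m-1).toNat, by omega⟩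
  have h0 : (∮ z in C(0, 1), z ^ k • g z) = 0 := by
    refine circleIntegral_eq_zero_of_differentiable_on_off_countable zero_le_one
      Set.countable_empty ?_ ?_
    · exact (continuous_pow k).continuousOn.smul hc
    · intro z hz
      exact ((differentiableAt_pow k).smul
        (hd.differentiableAt (isOpen_ball.mem_nhds hz.1)))
  have h2 := (circ_pow_to_fourC g k).symm.trans h0
  rcases mul_eq_zero.mp h2 with h | h
  · exact absurd h I_ne_zero
  · exact h



lemma key_rep (s : ℕ) (g : ℂ → ℂ) (hc : ContinuousOn g (closedBall 0 1))
    (hd : DifferentiableOn ℂ g (ball 0 1))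
    (hb : ∀ σ ∈ sphere (0:ℂ) 1, ∃ r : ℝ, g σ = (r:ℝ) * σ ^ s) :
    ∃ a : ℕ → ℂ, (∀ k, k ≤ s → a (s + k) = (starRingEnd ℂ) (a (s - k))) ∧
      ∀ z ∈ closedBall (0:ℂ) 1, g z = ∑ n ∈ Finset.range (2*s+1), a n * z ^ n := by
  have hps := Complex.hasFPowerSeriesOnBall_of_differentiable_off_countable (R := 1) (c := 0)
      (f := g) (s := ∅) Set.countable_empty (by simpa using hc)
      (fun z hz => hd.differentiableAt (isOpen_ball.mem_nhds (by simpa using hz.1))) one_pos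
  set a : ℕ → ℂ := fun n => (2 * (Real.pi:ℂ))⁻¹ * fourC g n with ha
  have hpn : ∀ (n : ℕ) (z : ℂ), (cauchyPowerSeries g 0 1 n fun _ => z) = z ^ n • a n := by
    intro n z
    simp only [cauchyPowerSeries, ContinuousMultilinearMap.mkPiRing_apply, Fin.prod_const]
    rw [circ_inv_to_fourC, ha]
    simp only [smul_eq_mul]
    have : (2 * (Real.pi:ℂ) * I)⁻¹ * I = (2 * (Real.pi:ℂ))⁻¹ := by
      rw [mul_inv, mul_assoc, inv_mul_cancel₀ Complex.I_ne_zero, mul_one]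
    linear_combination z^n * fourC g n * this
  have hsum : ∀ z ∈ ball (0:ℂ) 1, HasSum (fun n => z ^ n • a n) (g z) := by
    intro z hz
    have := hps.hasSum (y := z) (by rw [Metric.emetric_ball_nnreal]; simpa using hz)
    simpa [hpn] using this
  have hCsym : ∀ n : ℤ, fourC g n = (starRingEnd ℂ) (fourC g (2*s - n)) := fourC_conj g s hb
  have hconst : (starRingEnd ℂ) ((2 * (Real.pi:ℂ))⁻¹) = (2 * (Real.pi:ℂ))⁻¹ := by
    rw [map_inv₀, map_mul, map_ofNat, Complex.conj_ofReal]
  have hasym : ∀ k, k ≤ s → a (s + k) = (starRingEnd ℂ) (a (s - k)) := by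
    intro k hk
    have h1 := hCsym ((s:ℤ) + k)
    have h2 : (2*(s:ℤ) - ((s:ℤ) + k)) = ((s - k : ℕ) : ℤ) := by
      rw [Nat.cast_sub hk]; ring
    rw [h2] at h1
    have hcast : ((s + k : ℕ) : ℤ) = (s:ℤ) + k := by push_cast; ring
    simp only [ha, map_mul, hconst, hcast, h1]
  have hvan : ∀ n, 2*s+1 ≤ n → a n = 0 := by
    intro n hn
    have h1 := hCsym n
    have h2 : (2*(s:ℤ) - n) < 0 := by push_cast; omega
    rw [fourC_neg g hc hd _ h2, map_zero] at h1
    simp [ha, h1]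
  have hball : ∀ z ∈ ball (0:ℂ) 1, g z = ∑ n ∈ Finset.range (2*s+1), a n * z ^ n := by
    intro z hz
    have h1 := hsum z hz
    have h2 : HasSum (fun n => z ^ n • a n) (∑ n ∈ Finset.range (2*s+1), z ^ n • a n) :=
      hasSum_sum_of_ne_finset_zero (by
        intro n hn
        simp [hvan n (by simpa using hn)])
    rw [h1.unique h2]
    exact Finset.sum_congr rfl fun n _ => by rw [smul_eq_mul, mul_comm]
  refine ⟨a, hasym, ?_⟩
  have hF : ContinuousOn (fun z : ℂ => ∑ n ∈ Finset.range (2*s+1), a n * z ^ n)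
      (closedBall 0 1) := by
    exact (continuous_finset_sum _ fun n _ =>
      continuous_const.mul (continuous_pow n)).continuousOn
  exact Set.EqOn.of_subset_closure hball hc hF ball_subset_closedBall
    (by rw [closure_ball (0:ℂ) one_ne_zero])



lemma sphere_pow_add (s j : ℕ) (hj : j ≤ s) (σ : ℂ) (hσ : σ ∈ sphere (0:ℂ) 1) :
    σ ^ (s + j) + σ ^ (s - j) = ((2 * (σ ^ j).re : ℝ) : ℂ) * σ ^ s := by
  have habs : ‖σ‖ = 1 := by simpa [Complex.dist_eq] using hσ
  have hconj : (starRingEnd ℂ) (σ ^ j) * σ ^ j = 1 := by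
    rw [mul_comm, Complex.mul_conj, Complex.normSq_eq_norm_sq]
    simp [habs]
  have hps : σ ^ (s - j) * σ ^ j = σ ^ s := by
    rw [← pow_add, Nat.sub_add_cancel hj]
  have hre : ((2 * (σ ^ j).re : ℝ) : ℂ) = σ ^ j + (starRingEnd ℂ) (σ ^ j) := by
    rw [Complex.add_conj]
  rw [hre, pow_add]
  linear_combination (-(σ ^ (s - j))) * hconj + ((starRingEnd ℂ) (σ ^ j)) * hps

lemma sphere_pow_sub (s j : ℕ) (hj : j + 1 ≤ s) (σ : ℂ) (hσ : σ ∈ sphere (0:ℂ) 1) :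
    I * (σ ^ (s + j + 1) - σ ^ (s - (j + 1))) = ((-2 * (σ ^ (j+1)).im : ℝ) : ℂ) * σ ^ s := by
  have habs : ‖σ‖ = 1 := by simpa [Complex.dist_eq] using hσ
  have hconj : (starRingEnd ℂ) (σ ^ (j+1)) * σ ^ (j+1) = 1 := by
    rw [mul_comm, Complex.mul_conj, Complex.normSq_eq_norm_sq]
    simp [habs]
  have hps : σ ^ (s - (j+1)) * σ ^ (j+1) = σ ^ s := by
    rw [← pow_add, Nat.sub_add_cancel hj]
  have hsub : σ ^ (j+1) - (starRingEnd ℂ) (σ ^ (j+1)) = 2 * ((σ ^ (j+1)).im : ℂ) * I := by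
    rw [Complex.sub_conj]; push_cast; ring
  have hI : (I:ℂ) * I = -1 := Complex.I_mul_I
  have h2 : s + j + 1 = s + (j + 1) := by omega
  rw [h2, pow_add]
  push_cast
  linear_combination (I * σ ^ (s - (j+1))) * hconj - (I * (starRingEnd ℂ) (σ ^ (j+1))) * hps
    + (σ ^ s * I) * hsub + (2 * (σ ^ (j+1)).im * σ ^ s) * hI

lemma pair_id (w zp zq : ℂ) :
    w * zp + (starRingEnd ℂ) w * zq
      = (w.re : ℝ) • (zp + zq) + (w.im : ℝ) • (I * (zp - zq)) := by
  have h := Complex.re_add_im w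
  have hc : (starRingEnd ℂ) w = (w.re : ℂ) - (w.im : ℂ) * I := by
    have h2 := Complex.sub_conj w
    push_cast at h2
    linear_combination h.symm - h2
  simp only [Complex.real_smul]
  linear_combination zp * h.symm + zq * hc

lemma alg_id (s : ℕ) (a : ℕ → ℂ)
    (hsym : ∀ k, k ≤ s → a (s + k) = (starRingEnd ℂ) (a (s - k))) (z : ℂ) :
    ∑ n ∈ range (2*s+1), a n * z^n
      = ∑ j ∈ range (s+1),
          (if j = 0 then (a s).re/2 else (a (s+j)).re) • (z^(s+j) + z^(s-j))
        + ∑ j ∈ range s, (a (s+j+1)).im • (I * (z^(s+j+1) - z^(s-(j+1)))) := by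
  have hs2 : 2*s+1 = s + (s+1) := by ring
  rw [hs2, Finset.sum_range_add, ← Finset.sum_range_reflect (fun n => a n * z^n) s,
    Finset.sum_range_succ' (fun k => a (s + k) * z^(s+k)) s,
    Finset.sum_range_succ' (fun j => (if j = 0 then (a s).re/2 else (a (s+j)).re)
      • (z^(s+j) + z^(s-j))) s]
  have h0 : ((a s).re : ℂ) = a s := by
    simpa using Complex.conj_eq_iff_re.mp (hsym 0 (Nat.zero_le s)).symm
  have hhead : a (s + 0) * z ^ (s + 0)
      = (if (0:ℕ) = 0 then (a s).re/2 else (a (s+0)).re) • (z^(s+0) + z^(s-0)) := by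
    simp only [if_pos rfl, add_zero, Nat.sub_zero, Complex.real_smul]
    push_cast
    linear_combination (-(z^s)) * h0
  have hmain : ∑ j ∈ range s, a (s-1-j) * z^(s-1-j)
        + ∑ k ∈ range s, a (s+(k+1)) * z^(s+(k+1))
      = ∑ k ∈ range s,
          (if k + 1 = 0 then (a s).re/2 else (a (s+(k+1))).re) • (z^(s+(k+1)) + z^(s-(k+1)))
        + ∑ j ∈ range s, (a (s+j+1)).im • (I * (z^(s+j+1) - z^(s-(j+1)))) := by
    rw [← Finset.sum_add_distrib, ← Finset.sum_add_distrib]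
    refine Finset.sum_congr rfl fun j hj => ?_
    simp only [Finset.mem_range] at hj
    have h1 : s - 1 - j = s - (j+1) := by omega
    have h2 : a (s - (j+1)) = (starRingEnd ℂ) (a (s + (j+1))) := by
      rw [hsym (j+1) (by omega), Complex.conj_conj]
    have h4 : s + (j+1) = s + j + 1 := by omega
    rw [h1, h2, if_neg (Nat.succ_ne_zero j), h4]
    linear_combination pair_id (a (s+j+1)) (z^(s+j+1)) (z^(s-(j+1)))
  linear_combination hhead + hmain

lemma indep_aux (s : ℕ) (u v : ℕ → ℝ)
    (h : ∀ z : ℂ, ‖z‖ ≤ 1 →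
      (∑ j ∈ range (s+1), (u j : ℂ) * (z^(s+j) + z^(s-j)))
        + ∑ j ∈ range s, (v j : ℂ) * (I * (z^(s+j+1) - z^(s-(j+1)))) = 0) :
    (∀ j, j ≤ s → u j = 0) ∧ (∀ j, j < s → v j = 0) := by
  set P : Polynomial ℂ :=
      (∑ j ∈ range (s+1), Polynomial.C (u j : ℂ) * (X^(s+j) + X^(s-j)))
      + ∑ j ∈ range s, Polynomial.C ((v j : ℂ) * I) * (X^(s+j+1) - X^(s-(j+1))) with hP
  have heval : ∀ z : ℂ, ‖z‖ ≤ 1 → P.eval z = 0 := by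
    intro z hz
    rw [hP]
    simp only [Polynomial.eval_add, Polynomial.eval_finset_sum, Polynomial.eval_mul,
      Polynomial.eval_C, Polynomial.eval_pow, Polynomial.eval_X, Polynomial.eval_sub]
    have h2 : ∑ j ∈ range s, ((v j : ℂ) * I) * (z^(s+j+1) - z^(s-(j+1)))
        = ∑ j ∈ range s, (v j : ℂ) * (I * (z^(s+j+1) - z^(s-(j+1)))) :=
      Finset.sum_congr rfl fun j _ => by ring
    rw [h2]
    exact h z hz
  have hP0 : P = 0 := by
    apply Polynomial.eq_zero_of_infinite_isRoot
    apply Set.infinite_of_injective_forall_mem (f := fun n : ℕ => (((1:ℝ)/(n+2) : ℝ) : ℂ))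
    · intro m n hmn
      simp only [Complex.ofReal_inj] at hmn
      have hm : (0:ℝ) < (m:ℝ) + 2 := by positivity
      have hn : (0:ℝ) < (n:ℝ) + 2 := by positivity
      rw [div_eq_div_iff hm.ne' hn.ne'] at hmn
      have : (m:ℝ) = (n:ℝ) := by linarith
      exact_mod_cast this
    · intro n
      simp only [Set.mem_setOf_eq, Polynomial.IsRoot]
      apply heval
      rw [Complex.norm_real, Real.norm_eq_abs]
      rw [_root_.abs_of_nonneg (by positivity)]
      rw [div_le_one (by positivity)]
      linarith [Nat.cast_nonneg (α := ℝ) n]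
  have hcoeff : ∀ n, ((∑ j ∈ range (s+1), (u j : ℂ) *
        ((if n = s+j then (1:ℂ) else 0) + (if n = s-j then (1:ℂ) else 0)))
      + ∑ j ∈ range s, ((v j : ℂ) * I) *
        ((if n = s+j+1 then (1:ℂ) else 0) - (if n = s-(j+1) then (1:ℂ) else 0))) = 0 := by
    intro n
    have := congrArg (fun p => Polynomial.coeff p n) hP0
    simp only [hP, Polynomial.coeff_add, Polynomial.finset_sum_coeff, Polynomial.coeff_C_mul,
      Polynomial.coeff_sub, Polynomial.coeff_X_pow, Polynomial.coeff_zero] at this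
    exact this
  have hu0 : u 0 = 0 := by
    have h1 := hcoeff s
    have e1 : ∑ j ∈ range (s+1), (u j : ℂ) *
        ((if s = s+j then (1:ℂ) else 0) + (if s = s-j then (1:ℂ) else 0))
        = ∑ j ∈ range (s+1), (if j = 0 then 2 * (u j : ℂ) else 0) := by
      refine Finset.sum_congr rfl fun j hj => ?_
      simp only [Finset.mem_range] at hj
      by_cases hj0 : j = 0
      · subst hj0
        rw [if_pos (by omega), if_pos (by omega), if_pos rfl]
        ring
      · rw [if_neg (by omega), if_neg (by omega), if_neg hj0]
        ring
    have e2 : ∑ j ∈ range s, ((v j : ℂ) * I) *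
        ((if s = s+j+1 then (1:ℂ) else 0) - (if s = s-(j+1) then (1:ℂ) else 0))
        = 0 := by
      refine Finset.sum_eq_zero fun j hj => ?_
      simp only [Finset.mem_range] at hj
      rw [if_neg (by omega), if_neg (by omega)]
      ring
    rw [e1, e2, Finset.sum_ite_eq' (range (s+1)) 0 (fun j => 2 * (u j : ℂ)),
      if_pos (Finset.mem_range.mpr (by omega)), add_zero] at h1
    have : (u 0 : ℂ) = 0 := by linear_combination h1 / 2
    exact_mod_cast this
  have huv : ∀ j, j < s → u (j+1) = 0 ∧ v j = 0 := by
    intro k hk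
    have h1 := hcoeff (s+k+1)
    have e1 : ∑ j ∈ range (s+1), (u j : ℂ) *
        ((if s+k+1 = s+j then (1:ℂ) else 0) + (if s+k+1 = s-j then (1:ℂ) else 0))
        = ∑ j ∈ range (s+1), (if j = k+1 then (u j : ℂ) else 0) := by
      refine Finset.sum_congr rfl fun j hj => ?_
      simp only [Finset.mem_range] at hj
      by_cases hj0 : j = k+1
      · subst hj0
        rw [if_pos (by omega), if_neg (by omega), if_pos rfl]
        ring
      · rw [if_neg (by omega), if_neg (by omega), if_neg hj0]
        ring
    have e2 : ∑ j ∈ range s, ((v j : ℂ) * I) *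
        ((if s+k+1 = s+j+1 then (1:ℂ) else 0) - (if s+k+1 = s-(j+1) then (1:ℂ) else 0))
        = ∑ j ∈ range s, (if j = k then (v j : ℂ) * I else 0) := by
      refine Finset.sum_congr rfl fun j hj => ?_
      simp only [Finset.mem_range] at hj
      by_cases hj0 : j = k
      · subst hj0
        rw [if_pos (by omega), if_neg (by omega), if_pos rfl]
        ring
      · rw [if_neg (by omega), if_neg (by omega), if_neg hj0]
        ring
    rw [e1, e2, Finset.sum_ite_eq' (range (s+1)) (k+1) (fun j => (u j : ℂ)),
      Finset.sum_ite_eq' (range s) k (fun j => (v j : ℂ) * I),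
      if_pos (Finset.mem_range.mpr (by omega)), if_pos (Finset.mem_range.mpr hk)] at h1
    have hre := congrArg Complex.re h1
    have him := congrArg Complex.im h1
    simp [Complex.add_re, Complex.add_im, Complex.mul_re, Complex.mul_im] at hre him
    exact ⟨by exact_mod_cast hre, by exact_mod_cast him⟩
  constructor
  · intro j hj
    rcases Nat.eq_zero_or_pos j with rfl | hjpos
    · exact hu0
    · obtain ⟨k, rfl⟩ : ∃ k, j = k + 1 := ⟨j - 1, by omega⟩
      exact (huv k (by omega)).1
  · intro j hj
    exact (huv j hj).2

end StmtAux

/-- for `s ≥ 0`, the real vector space of holomorphic functions `g` on the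
disc, continuous up to the boundary, with `g(σ)σ^{-s}` real on the unit circle, has the
basis `{σ^s(σ^j + σ^{-j}) : 0 ≤ j ≤ s} ∪ {i σ^s(σ^j − σ^{-j}) : 1 ≤ j ≤ s}` and hence
real dimension `2s+1`. -/
theorem stmt_3 (s : ℕ) :
    ∃ V : Submodule ℝ (↥(closedBall (0:ℂ) 1) → ℂ),
      (V : Set (↥(closedBall (0:ℂ) 1) → ℂ)) =
        (fun G : ℂ → ℂ => fun z : ↥(closedBall (0:ℂ) 1) => G (z : ℂ)) ''
          {g : ℂ → ℂ | ContinuousOn g (closedBall 0 1) ∧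
            DifferentiableOn ℂ g (ball 0 1) ∧
            ∀ σ ∈ sphere (0:ℂ) 1, ∃ r : ℝ, g σ = (r : ℂ) * σ ^ s} ∧
      Module.finrank ℝ V = 2 * s + 1 ∧
      ∃ b : Fin (s + 1) ⊕ Fin s → (↥(closedBall (0:ℂ) 1) → ℂ),
        (∀ j : Fin (s + 1), ∀ z : ↥(closedBall (0:ℂ) 1),
          b (Sum.inl j) z = (z : ℂ) ^ (s + (j : ℕ)) + (z : ℂ) ^ (s - (j : ℕ))) ∧
        (∀ j : Fin s, ∀ z : ↥(closedBall (0:ℂ) 1),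
          b (Sum.inr j) z = Complex.I *
            ((z : ℂ) ^ (s + (j : ℕ) + 1) - (z : ℂ) ^ (s - ((j : ℕ) + 1)))) ∧
        (∀ i, b i ∈ V) ∧
        LinearIndependent ℝ b ∧
        Submodule.span ℝ (Set.range b) = V := by
  classical
  set ρ : (ℂ → ℂ) →ₗ[ℝ] (↥(closedBall (0:ℂ) 1) → ℂ) :=
    LinearMap.funLeft ℝ ℂ (fun z : ↥(closedBall (0:ℂ) 1) => (z : ℂ)) with hρ
  set W : Submodule ℝ (ℂ → ℂ) :=
    { carrier := {g : ℂ → ℂ | ContinuousOn g (closedBall 0 1) ∧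
        DifferentiableOn ℂ g (ball 0 1) ∧
        ∀ σ ∈ sphere (0:ℂ) 1, ∃ r : ℝ, g σ = (r : ℂ) * σ ^ s}
      add_mem' := by
        rintro g h ⟨hg1, hg2, hg3⟩ ⟨hh1, hh2, hh3⟩
        refine ⟨hg1.add hh1, hg2.add hh2, fun σ hσ => ?_⟩
        obtain ⟨r1, e1⟩ := hg3 σ hσ
        obtain ⟨r2, e2⟩ := hh3 σ hσ
        refine ⟨r1 + r2, ?_⟩
        simp only [Pi.add_apply, e1, e2]
        push_cast
        ring
      zero_mem' := ⟨continuousOn_const, differentiableOn_const 0, fun σ _ => ⟨0, by simp⟩⟩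
      smul_mem' := by
        rintro c g ⟨hg1, hg2, hg3⟩
        refine ⟨hg1.const_smul c, hg2.const_smul c, fun σ hσ => ?_⟩
        obtain ⟨r, e⟩ := hg3 σ hσ
        refine ⟨c * r, ?_⟩
        simp only [Pi.smul_apply, e, Complex.real_smul]
        push_cast
        ring } with hW
  set b : Fin (s + 1) ⊕ Fin s → (↥(closedBall (0:ℂ) 1) → ℂ) := fun i =>
    match i with
    | Sum.inl j => fun z => (z : ℂ) ^ (s + (j : ℕ)) + (z : ℂ) ^ (s - (j : ℕ))
    | Sum.inr j => fun z => Complex.I *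
        ((z : ℂ) ^ (s + (j : ℕ) + 1) - (z : ℂ) ^ (s - ((j : ℕ) + 1))) with hb
  have hbmem : ∀ i, b i ∈ W.map ρ := by
    intro i
    rw [Submodule.mem_map]
    match i with
    | Sum.inl j =>
      refine ⟨fun z => z ^ (s + (j : ℕ)) + z ^ (s - (j : ℕ)), ⟨?_, ?_, ?_⟩, rfl⟩
      · exact ((continuous_pow _).add (continuous_pow _)).continuousOn
      · exact ((differentiable_pow _).add (differentiable_pow _)).differentiableOn
      · intro σ hσ
        exact ⟨2 * (σ ^ (j : ℕ)).re,
          sphere_pow_add s j (Nat.lt_succ_iff.mp j.isLt) σ hσ⟩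
    | Sum.inr j =>
      refine ⟨fun z => Complex.I * (z ^ (s + (j : ℕ) + 1) - z ^ (s - ((j : ℕ) + 1))),
        ⟨?_, ?_, ?_⟩, rfl⟩
      · exact (continuous_const.mul ((continuous_pow _).sub (continuous_pow _))).continuousOn
      · exact (((differentiable_pow _).sub (differentiable_pow _)).const_mul _).differentiableOn
      · intro σ hσ
        exact ⟨-2 * (σ ^ ((j : ℕ)+1)).im, sphere_pow_sub s j j.isLt σ hσ⟩
  have hspan : Submodule.span ℝ (Set.range b) = W.map ρ := by
    apply le_antisymm
    · rw [Submodule.span_le]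
      rintro x ⟨i, rfl⟩
      exact hbmem i
    · rintro x hx
      obtain ⟨G, hG, rfl⟩ := Submodule.mem_map.mp hx
      obtain ⟨hG1, hG2, hG3⟩ := hG
      obtain ⟨a, hasym, hrep⟩ := key_rep s G hG1 hG2 (by
        intro σ hσ
        obtain ⟨r, hr⟩ := hG3 σ hσ
        exact ⟨r, hr⟩)
      set co : Fin (s + 1) ⊕ Fin s → ℝ := fun i =>
        match i with
        | Sum.inl j => if (j : ℕ) = 0 then (a s).re / 2 else (a (s + (j : ℕ))).re
        | Sum.inr j => (a (s + (j : ℕ) + 1)).im with hco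
      have hfun : ρ G = ∑ i, co i • b i := by
        funext z
        have hz := z.2
        have hGz : ρ G z = G (z : ℂ) := rfl
        rw [hGz, hrep (z : ℂ) hz, alg_id s a hasym (z : ℂ)]
        rw [Finset.sum_apply]
        rw [Fintype.sum_sum_type]
        simp only [Pi.smul_apply]
        congr 1
        · rw [← Fin.sum_univ_eq_sum_range (fun j =>
            (if j = 0 then (a s).re/2 else (a (s+j)).re)
              • ((z:ℂ)^(s+j) + (z:ℂ)^(s-j))) (s+1)]
        · rw [← Fin.sum_univ_eq_sum_range (fun j =>
            (a (s+j+1)).im • (I * ((z:ℂ)^(s+j+1) - (z:ℂ)^(s-(j+1))))) s]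
      rw [hfun]
      exact Submodule.sum_mem _ fun i _ =>
        Submodule.smul_mem _ _ (Submodule.subset_span ⟨i, rfl⟩)
  have hli : LinearIndependent ℝ b := by
    rw [Fintype.linearIndependent_iff]
    intro c hc
    set u : ℕ → ℝ := fun j => if hj : j < s + 1 then c (Sum.inl ⟨j, hj⟩) else 0 with hu
    set v : ℕ → ℝ := fun j => if hj : j < s then c (Sum.inr ⟨j, hj⟩) else 0 with hv
    have key := indep_aux s u v (by
      intro z hz
      have hzK : z ∈ closedBall (0:ℂ) 1 := by
        simpa [Complex.dist_eq] using hz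
      have h0 := congrFun hc (⟨z, hzK⟩ : ↥(closedBall (0:ℂ) 1))
      rw [Finset.sum_apply] at h0
      rw [Fintype.sum_sum_type] at h0
      simp only [Pi.smul_apply, Pi.zero_apply] at h0
      have e1 : ∀ j : Fin (s+1),
          c (Sum.inl j) • b (Sum.inl j) (⟨z, hzK⟩ : ↥(closedBall (0:ℂ) 1))
            = (u (j:ℕ) : ℂ) * (z^(s+(j:ℕ)) + z^(s-(j:ℕ))) := by
        intro j
        rw [hu]
        simp only [dif_pos j.isLt, Fin.eta, hb, Complex.real_smul]
      have e2 : ∀ j : Fin s,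
          c (Sum.inr j) • b (Sum.inr j) (⟨z, hzK⟩ : ↥(closedBall (0:ℂ) 1))
            = (v (j:ℕ) : ℂ) * (I * (z^(s+(j:ℕ)+1) - z^(s-((j:ℕ)+1)))) := by
        intro j
        rw [hv]
        simp only [dif_pos j.isLt, Fin.eta, hb, Complex.real_smul]
      rw [Finset.sum_congr rfl (fun j _ => e1 j), Finset.sum_congr rfl (fun j _ => e2 j)] at h0
      rw [Fin.sum_univ_eq_sum_range (fun j => (u j : ℂ) * (z^(s+j) + z^(s-j))) (s+1),
        Fin.sum_univ_eq_sum_range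
          (fun j => (v j : ℂ) * (I * (z^(s+j+1) - z^(s-(j+1))))) s] at h0
      exact h0)
    intro i
    match i with
    | Sum.inl j =>
      have := key.1 (j : ℕ) (Nat.lt_succ_iff.mp j.isLt)
      rw [hu] at this
      simpa [dif_pos j.isLt, Fin.eta, Nat.lt_succ_iff.mp j.isLt] using this
    | Sum.inr j =>
      have := key.2 (j : ℕ) j.isLt
      rw [hv] at this
      simpa [dif_pos j.isLt, Fin.eta] using this
  refine ⟨W.map ρ, ?_, ?_, b, fun j z => rfl, fun j z => rfl, hbmem, hli, hspan⟩
  · rw [Submodule.map_coe]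
    rfl
  · rw [← hspan, finrank_span_eq_card hli]
    simp [Fintype.card_sum]
    ring
end

section
/- Let f be a real-valued Hölder continuous function on the unit circle with f(1) = 0 and T₁ the Hilbert transform normalized at 1. Then (1/2π) ∫₀^{2π} (f − iT₁f)(e^{iθ}) dθ = −(1/π) ∫₀^{2π} f(e^{iθ})/(e^{−iθ} − 1) dθ. -/
open Complex Metric intervalIntegral
open scoped NNReal Real
open MeasureTheory Filter
open scoped Topology

lemma exp_mem_sphere (θ : ℝ) : Complex.exp (θ * Complex.I) ∈ sphere (0:ℂ) 1 := by
  simp [mem_sphere_zero_iff_norm, Complex.norm_exp_ofReal_mul_I]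

lemma norm_exp_sub_one_ge (x : ℝ) (hx : |x| ≤ π) :
    2 / π * |x| ≤ ‖Complex.exp (x * Complex.I) - 1‖ := by
  have hπ := Real.pi_pos
  have hre : (Complex.exp (x*Complex.I) - 1).re = Real.cos x - 1 := by
    simp [Complex.exp_ofReal_mul_I_re]
  have him : (Complex.exp (x*Complex.I) - 1).im = Real.sin x := by
    simp [Complex.exp_ofReal_mul_I_im]
  have hsq : ‖Complex.exp (x*Complex.I) - 1‖^2 = 2 - 2*Real.cos x := by
    rw [Complex.sq_norm, Complex.normSq_apply, hre, him]
    nlinarith [Real.sin_sq_add_cos_sq x]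
  have hcos := Real.cos_le_one_sub_mul_cos_sq hx
  have h1 : (2/π * |x|)^2 ≤ ‖Complex.exp (x*Complex.I) - 1‖^2 := by
    rw [hsq, mul_pow, _root_.sq_abs]
    have h2 : (2:ℝ)/π^2 * x^2 ≤ 1 - Real.cos x := by linarith
    have h3 : (0:ℝ) < π^2 := by positivity
    have : (2/π)^2 * x^2 = (2/π^2 * x^2) * (2/1) := by field_simp
    nlinarith
  nlinarith [norm_nonneg (Complex.exp (x*Complex.I) - 1), abs_nonneg x,
    mul_nonneg (div_nonneg (by norm_num : (0:ℝ) ≤ 2) hπ.le) (abs_nonneg x)]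

lemma norm_exp_sub_one_ge' {θ : ℝ} (h0 : 0 ≤ θ) (h2 : θ ≤ 2*π) :
    2/π * min θ (2*π - θ) ≤ ‖Complex.exp (θ * Complex.I) - 1‖ := by
  have hπ := Real.pi_pos
  have hc : (0:ℝ) ≤ 2/π := by positivity
  rcases le_total θ π with h | h
  · refine le_trans ?_ (norm_exp_sub_one_ge θ (abs_le.2 ⟨by linarith, h⟩))
    rw [_root_.abs_of_nonneg h0]
    exact mul_le_mul_of_nonneg_left (min_le_left _ _) hc
  · have hper : Complex.exp (θ * Complex.I) = Complex.exp ((θ - 2*π) * Complex.I) := by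
      rw [show ((θ:ℂ) - 2*π)*Complex.I = θ*Complex.I - 2*π*Complex.I from by ring,
        Complex.exp_sub, Complex.exp_two_pi_mul_I, div_one]
    rw [hper]
    have hb := norm_exp_sub_one_ge (θ - 2*π) (abs_le.2 ⟨by linarith, by linarith⟩)
    rw [_root_.abs_of_nonpos (by linarith), neg_sub] at hb
    push_cast at hb
    exact le_trans (mul_le_mul_of_nonneg_left (min_le_right _ _) hc) hb

lemma bnd_integrable {r : ℝ} (hr : -1 < r) :
    IntervalIntegrable (fun θ : ℝ => θ ^ r + (2*π - θ) ^ r) volume 0 (2*π) := by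
  refine (intervalIntegrable_rpow' hr).add ?_
  have h := (intervalIntegrable_rpow' (r := r) (a := 0) (b := 2*π) hr).comp_sub_left (2*π)
  simpa using h.symm

lemma norm_sub_one_add_le {σ : ℂ} (hσ : ‖σ‖ = 1) {ε : ℝ} (hε : 0 ≤ ε) :
    ‖σ - 1‖ ≤ ‖σ - (1 + (ε:ℂ))‖ := by
  have hre : σ.re ≤ 1 := by
    calc σ.re ≤ |σ.re| := le_abs_self _
    _ ≤ ‖σ‖ := Complex.abs_re_le_norm σ
    _ = 1 := hσ
  rw [Complex.norm_def, Complex.norm_def]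
  apply Real.sqrt_le_sqrt
  rw [Complex.normSq_apply, Complex.normSq_apply]
  simp only [Complex.sub_re, Complex.sub_im, Complex.add_re, Complex.add_im,
    Complex.one_re, Complex.one_im, Complex.ofReal_re, Complex.ofReal_im]
  nlinarith

lemma dom_bound {r : ℝ} (hr0 : -1 < r) (hr1 : r < 0) {θ : ℝ} (hθ : θ ∈ Set.Ioc 0 (2*π)) :
    ‖Complex.exp (θ * Complex.I) - 1‖ ^ r ≤ (2/π) ^ r * (θ ^ r + (2*π - θ) ^ r) := by
  have hπ := Real.pi_pos
  obtain ⟨h0, h2⟩ := hθ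
  have hθc : (0:ℝ) ≤ 2*π - θ := by linarith
  rcases eq_or_lt_of_le h2 with rfl | h2'
  · have he : Complex.exp ((2*π : ℝ) * Complex.I) - 1 = 0 := by
      rw [show (((2*π : ℝ)):ℂ) * Complex.I = 2*π*Complex.I from by push_cast; ring,
        Complex.exp_two_pi_mul_I, sub_self]
    rw [he, norm_zero, Real.zero_rpow hr1.ne]
    positivity
  · have hmin : 0 < min θ (2*π - θ) := lt_min h0 (by linarith)
    have hlow : 2/π * min θ (2*π - θ) ≤ ‖Complex.exp (θ * Complex.I) - 1‖ :=
      norm_exp_sub_one_ge' h0.le h2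
    have h1 : ‖Complex.exp (θ * Complex.I) - 1‖ ^ r ≤ (2/π * min θ (2*π - θ)) ^ r :=
      Real.rpow_le_rpow_of_nonpos (by positivity) hlow hr1.le
    refine h1.trans ?_
    rw [Real.mul_rpow (by positivity) hmin.le]
    refine mul_le_mul_of_nonneg_left ?_ (Real.rpow_nonneg (by positivity) r)
    rcases le_total θ (2*π - θ) with hm | hm
    · rw [min_eq_left hm]
      exact le_add_of_nonneg_right (Real.rpow_nonneg hθc r)
    · rw [min_eq_right hm]
      exact le_add_of_nonneg_left (Real.rpow_nonneg h0.le r)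


lemma cauchy_step {F : ℂ → ℂ} (hc : ContinuousOn F (closedBall 0 1))
    (hd : DifferentiableOn ℂ F (ball 0 1)) {a : ℂ} (ha : 1 < ‖a‖) :
    ∫ θ in (0:ℝ)..2*π,
      (Complex.exp (θ*Complex.I) * Complex.I) * (F (Complex.exp (θ*Complex.I)) / (Complex.exp (θ*Complex.I) - a)) = 0 := by
  have hne : ∀ z ∈ closedBall (0:ℂ) 1, z - a ≠ 0 := by
    intro z hz h
    rw [sub_eq_zero] at h
    rw [mem_closedBall, dist_zero_right] at hz
    exact absurd (h ▸ hz) (not_le.2 ha)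
  have h0 := circleIntegral_eq_zero_of_differentiable_on_off_countable
    (f := fun z => F z / (z - a)) (c := (0:ℂ)) zero_le_one Set.countable_empty
    (hc.div ((continuousOn_id.sub continuousOn_const)) hne)
    (fun z hz => by
      refine DifferentiableAt.div ?_ (differentiableAt_id.sub_const a) (hne z (ball_subset_closedBall hz.1))
      exact (hd z hz.1).differentiableAt (isOpen_ball.mem_nhds hz.1))
  rw [circleIntegral] at h0
  simp only [deriv_circleMap, circleMap, Complex.ofReal_one, zero_add, one_mul, smul_eq_mul] at h0
  exact h0


lemma master_bound {F : ℂ → ℂ} {s K : ℝ} (hs0 : 0 < s) (hs1 : s < 1) (hK : 0 ≤ K)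
    (hb : ∀ σ ∈ sphere (0:ℂ) 1, ‖F σ‖ ≤ K * ‖σ - 1‖ ^ s)
    (hmem : ∀ θ:ℝ, Complex.exp (θ * Complex.I) ∈ sphere (0:ℂ) 1)
    {θ : ℝ} (hθ : θ ∈ Set.Ioc 0 (2*π)) {ε : ℝ} (hε : 0 ≤ ε) :
    ‖F (Complex.exp (θ*Complex.I)) * Complex.exp (θ*Complex.I) /
        (Complex.exp (θ*Complex.I) - (1 + (ε:ℂ)))‖ ≤
      (K * (2/π) ^ (s-1)) * (θ ^ (s-1) + (2*π - θ) ^ (s-1)) := by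
  have hπ := Real.pi_pos
  set σ := Complex.exp (θ*Complex.I) with hσ
  have hσ1 : ‖σ‖ = 1 := by
    have := hmem θ; rwa [mem_sphere_zero_iff_norm] at this
  have hrpos : (0:ℝ) ≤ (2/π)^(s-1) := Real.rpow_nonneg (by positivity) _
  have hrhs : (0:ℝ) ≤ (K * (2/π) ^ (s-1)) * (θ ^ (s-1) + (2*π - θ) ^ (s-1)) := by
    have h1 : (0:ℝ) ≤ θ ^ (s-1) := Real.rpow_nonneg hθ.1.le _
    have h2 : (0:ℝ) ≤ (2*π - θ) ^ (s-1) := Real.rpow_nonneg (by linarith [hθ.2]) _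
    positivity
  rcases eq_or_ne σ 1 with h1 | h1
  · have h2 := hb σ (hmem θ)
    rw [h1, sub_self, norm_zero, Real.zero_rpow hs0.ne', mul_zero] at h2
    have hF0 : F 1 = 0 := norm_le_zero_iff.1 h2
    rw [h1, hF0, zero_mul, zero_div, norm_zero]
    exact hrhs
  · have hd : 0 < ‖σ - 1‖ := by
      rw [norm_pos_iff]; exact sub_ne_zero.2 h1
    have hden : ‖σ - 1‖ ≤ ‖σ - (1 + (ε:ℂ))‖ := by
      have hre : σ.re ≤ 1 := by
        calc σ.re ≤ |σ.re| := le_abs_self _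
        _ ≤ ‖σ‖ := Complex.abs_re_le_norm σ
        _ = 1 := hσ1
      rw [Complex.norm_def, Complex.norm_def]
      apply Real.sqrt_le_sqrt
      rw [Complex.normSq_apply, Complex.normSq_apply]
      simp only [Complex.sub_re, Complex.sub_im, Complex.add_re, Complex.add_im,
        Complex.one_re, Complex.one_im, Complex.ofReal_re, Complex.ofReal_im]
      nlinarith
    rw [norm_div, norm_mul, hσ1, mul_one]
    calc ‖F σ‖ / ‖σ - (1 + (ε:ℂ))‖ ≤ (K * ‖σ - 1‖ ^ s) / ‖σ - 1‖ := by
          apply div_le_div₀ (by positivity) (hb σ (hmem θ)) hd hden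
    _ = K * ‖σ - 1‖ ^ (s - 1) := by
          rw [Real.rpow_sub hd, Real.rpow_one]; ring
    _ ≤ K * ((2/π) ^ (s-1) * (θ ^ (s-1) + (2*π - θ) ^ (s-1))) := by
          refine mul_le_mul_of_nonneg_left ?_ hK
          exact dom_bound (by linarith) (by linarith) hθ
    _ = (K * (2/π) ^ (s-1)) * (θ ^ (s-1) + (2*π - θ) ^ (s-1)) := by ring

lemma J_zero {F : ℂ → ℂ} (hc : ContinuousOn F (closedBall 0 1))
    (hd : DifferentiableOn ℂ F (ball 0 1)) {s K : ℝ} (hs0 : 0 < s) (hs1 : s < 1) (hK : 0 ≤ K)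
    (hb : ∀ σ ∈ sphere (0:ℂ) 1, ‖F σ‖ ≤ K * ‖σ - 1‖ ^ s) :
    ∫ θ in (0:ℝ)..2*π, F (Complex.exp (θ*Complex.I)) * Complex.exp (θ*Complex.I) /
      (Complex.exp (θ*Complex.I) - 1) = 0 := by
  have hπ := Real.pi_pos
  have hmem := exp_mem_sphere
  have hecont : Continuous (fun θ:ℝ => Complex.exp (θ*Complex.I)) :=
    (Complex.continuous_ofReal.mul continuous_const).cexp
  have hFcont : Continuous (fun θ:ℝ => F (Complex.exp (θ*Complex.I))) :=
    hc.comp_continuous hecont (fun θ => sphere_subset_closedBall (hmem θ))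
  set εn : ℕ → ℝ := fun n => 1/(n+1) with hεn
  have hεpos : ∀ n, 0 < εn n := fun n => by positivity
  have hnorm : ∀ n, ‖(1:ℂ) + ((εn n : ℝ):ℂ)‖ = 1 + εn n := by
    intro n
    rw [show (1:ℂ) + ((εn n : ℝ):ℂ) = (((1 + εn n :ℝ)):ℂ) by push_cast; ring,
      Complex.norm_real, Real.norm_eq_abs, _root_.abs_of_pos (by positivity)]
  have hzero : ∀ n : ℕ, ∫ θ in (0:ℝ)..2*π,
      F (Complex.exp (θ*Complex.I)) * Complex.exp (θ*Complex.I) /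
        (Complex.exp (θ*Complex.I) - (1 + ((εn n : ℝ):ℂ))) = 0 := by
    intro n
    have ha : 1 < ‖(1:ℂ) + ((εn n : ℝ):ℂ)‖ := by rw [hnorm n]; linarith [hεpos n]
    have h0 := cauchy_step hc hd ha
    have heq : ∀ θ:ℝ, (Complex.exp (θ*Complex.I) * Complex.I) *
        (F (Complex.exp (θ*Complex.I)) / (Complex.exp (θ*Complex.I) - (1 + ((εn n : ℝ):ℂ)))) =
        Complex.I * (F (Complex.exp (θ*Complex.I)) * Complex.exp (θ*Complex.I) /
          (Complex.exp (θ*Complex.I) - (1 + ((εn n : ℝ):ℂ)))) := fun θ => by ring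
    rw [intervalIntegral.integral_congr (fun θ _ => heq θ), intervalIntegral.integral_const_mul]
      at h0
    exact (mul_eq_zero.1 h0).resolve_left Complex.I_ne_zero
  have key : Tendsto (fun n : ℕ => ∫ θ in (0:ℝ)..2*π,
      F (Complex.exp (θ*Complex.I)) * Complex.exp (θ*Complex.I) /
        (Complex.exp (θ*Complex.I) - (1 + ((εn n : ℝ):ℂ)))) atTop
      (𝓝 (∫ θ in (0:ℝ)..2*π, F (Complex.exp (θ*Complex.I)) * Complex.exp (θ*Complex.I) /
        (Complex.exp (θ*Complex.I) - 1))) := by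
    apply intervalIntegral.tendsto_integral_filter_of_dominated_convergence
      (bound := fun θ => (K * (2/π) ^ (s-1)) * (θ ^ (s-1) + (2*π - θ) ^ (s-1)))
    · refine Eventually.of_forall (fun n => Continuous.aestronglyMeasurable ?_)
      refine (hFcont.mul hecont).div (hecont.sub continuous_const) (fun θ => ?_)
      intro h
      rw [sub_eq_zero] at h
      have : (1:ℝ) = 1 + εn n := by
        have h1 := hnorm n
        rw [← h] at h1
        have := mem_sphere_zero_iff_norm.1 (hmem θ)
        rw [this] at h1; exact h1
      linarith [hεpos n]
    · refine Eventually.of_forall (fun n => ?_)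
      refine (ae_of_all _ (fun θ hθ => ?_))
      rw [Set.uIoc_of_le (by positivity : (0:ℝ) ≤ 2*π)] at hθ
      exact master_bound hs0 hs1 hK hb hmem hθ (hεpos n).le
    · exact (bnd_integrable (by linarith)).const_mul _
    · refine (ae_of_all _ (fun θ hθ => ?_))
      rcases eq_or_ne (Complex.exp (θ*Complex.I)) 1 with h1 | h1
      · have hF0 : F (Complex.exp (θ*Complex.I)) = 0 := by
          have h2 := hb _ (hmem θ)
          rw [h1, sub_self, norm_zero, Real.zero_rpow hs0.ne', mul_zero] at h2
          rw [h1]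
          exact norm_le_zero_iff.1 h2
        simp only [hF0, zero_mul, zero_div]
        exact tendsto_const_nhds
      · have h2 : Tendsto (fun n:ℕ => ((εn n : ℝ):ℂ)) atTop (𝓝 0) := by
          rw [show (0:ℂ) = ((0:ℝ):ℂ) by norm_num]
          exact (Complex.continuous_ofReal.tendsto 0).comp tendsto_one_div_add_atTop_nhds_zero_nat
        have h3 : Tendsto (fun n:ℕ => Complex.exp (θ*Complex.I) - (1 + ((εn n : ℝ):ℂ))) atTop
            (𝓝 (Complex.exp (θ*Complex.I) - 1)) := by
          have := (tendsto_const_nhds (x := Complex.exp (θ*Complex.I)) (f := atTop (α := ℕ))).sub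
            ((tendsto_const_nhds (x := (1:ℂ))).add h2)
          simpa using this
        exact (tendsto_const_nhds.div h3 (sub_ne_zero.2 h1))
  have : Tendsto (fun _ : ℕ => (0:ℂ)) atTop
      (𝓝 (∫ θ in (0:ℝ)..2*π, F (Complex.exp (θ*Complex.I)) * Complex.exp (θ*Complex.I) /
        (Complex.exp (θ*Complex.I) - 1))) := by
    simpa only [hzero] using key
  exact tendsto_nhds_unique this tendsto_const_nhds

lemma my_intervalIntegral_conj {f : ℝ → ℂ} {a b : ℝ} :
    (∫ θ in a..b, (starRingEnd ℂ) (f θ)) = (starRingEnd ℂ) (∫ θ in a..b, f θ) := by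
  simp only [intervalIntegral, integral_conj, map_sub]

lemma holder_dist_le {C : ℝ≥0} {α : ℝ≥0} {f : ℂ → ℝ} {s : Set ℂ}
    (h : HolderOnWith C α f s) {x y : ℂ} (hx : x ∈ s) (hy : y ∈ s) :
    dist (f x) (f y) ≤ C * dist x y ^ (α:ℝ) := by
  have h2 := h.edist_le hx hy
  rw [edist_dist, edist_dist, ENNReal.ofReal_rpow_of_nonneg dist_nonneg α.coe_nonneg,
    ← ENNReal.ofReal_coe_nnreal, ← ENNReal.ofReal_mul C.coe_nonneg] at h2
  exact (ENNReal.ofReal_le_ofReal_iff (by positivity)).1 h2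


/-- with the same hypotheses as Statement 5 (`g = T₁f`),
`(1/2π)∫₀^{2π}(f−iT₁f) dθ = −(1/π)∫₀^{2π} f(σ)/(conj σ−1) dθ`. -/
theorem stmt_6 (α : ℝ≥0) (hα0 : 0 < α) (hα1 : (α : ℝ) < 1)
    (f g : ℂ → ℝ)
    (hf : ∃ C, HolderOnWith C α f (sphere (0:ℂ) 1)) (hf1 : f 1 = 0)
    (hg : ∃ C, HolderOnWith C α g (sphere (0:ℂ) 1)) (hg1 : g 1 = 0)
    (hext : ∃ F : ℂ → ℂ, ContinuousOn F (closedBall 0 1) ∧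
      DifferentiableOn ℂ F (ball 0 1) ∧
      ∀ σ ∈ sphere (0:ℂ) 1, F σ = (f σ : ℂ) + Complex.I * (g σ : ℂ)) :
    (1 / (2 * π) : ℂ) *
        ∫ θ in (0:ℝ)..(2 * π),
          ((f (Complex.exp (θ * Complex.I)) : ℂ) -
            Complex.I * (g (Complex.exp (θ * Complex.I)) : ℂ)) =
      -(1 / π : ℂ) *
        ∫ θ in (0:ℝ)..(2 * π),
          (f (Complex.exp (θ * Complex.I)) : ℂ) /
            (Complex.exp (-(θ * Complex.I)) - 1) := by
  have hπ := Real.pi_pos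
  obtain ⟨Cf, hf'⟩ := hf
  obtain ⟨Cg, hg'⟩ := hg
  obtain ⟨F, hFc, hFd, hFσ⟩ := hext
  have hmem := exp_mem_sphere
  have h1s : (1:ℂ) ∈ sphere (0:ℂ) 1 := by simp [mem_sphere_zero_iff_norm]
  have hF1 : F 1 = 0 := by rw [hFσ 1 h1s, hf1, hg1]; simp
  set s : ℝ := (α : ℝ) with hs
  have hs0 : 0 < s := NNReal.coe_pos.2 hα0
  set K : ℝ := (Cf : ℝ) + (Cg : ℝ) with hK
  have hK0 : 0 ≤ K := by positivity
  have hb : ∀ σ ∈ sphere (0:ℂ) 1, ‖F σ‖ ≤ K * ‖σ - 1‖ ^ s := by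
    intro σ hσ
    rw [hFσ σ hσ]
    have hfd := holder_dist_le hf' hσ h1s
    have hgd := holder_dist_le hg' hσ h1s
    rw [hf1, dist_zero_right, Real.norm_eq_abs] at hfd
    rw [hg1, dist_zero_right, Real.norm_eq_abs] at hgd
    rw [dist_eq_norm] at hfd hgd
    calc ‖(f σ : ℂ) + Complex.I * (g σ : ℂ)‖
        ≤ ‖(f σ : ℂ)‖ + ‖Complex.I * (g σ : ℂ)‖ := norm_add_le _ _
    _ = |f σ| + |g σ| := by
        rw [norm_mul, Complex.norm_I, one_mul, Complex.norm_real, Complex.norm_real,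
          Real.norm_eq_abs, Real.norm_eq_abs]
    _ ≤ (Cf : ℝ) * ‖σ - 1‖ ^ s + (Cg : ℝ) * ‖σ - 1‖ ^ s := add_le_add hfd hgd
    _ = K * ‖σ - 1‖ ^ s := by rw [hK]; ring
  -- the key vanishing integral
  have hQ0 : ∫ θ in (0:ℝ)..2*π, F (Complex.exp (θ*Complex.I)) * Complex.exp (θ*Complex.I) /
      (Complex.exp (θ*Complex.I) - 1) = 0 := J_zero hFc hFd hs0 hα1 hK0 hb
  -- continuity facts
  have hecont : Continuous (fun θ:ℝ => Complex.exp (θ*Complex.I)) :=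
    (Complex.continuous_ofReal.mul continuous_const).cexp
  have hFcont : Continuous (fun θ:ℝ => F (Complex.exp (θ*Complex.I))) :=
    hFc.comp_continuous hecont (fun θ => sphere_subset_closedBall (hmem θ))
  -- integrability facts
  have hPInt : IntervalIntegrable (fun θ:ℝ => F (Complex.exp (θ*Complex.I))) volume 0 (2*π) :=
    hFcont.intervalIntegrable _ _
  have hQmeas : Measurable (fun θ:ℝ => F (Complex.exp (θ*Complex.I)) * Complex.exp (θ*Complex.I) /
      (Complex.exp (θ*Complex.I) - 1)) := by
    simp only [div_eq_mul_inv]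
    exact (hFcont.mul hecont).measurable.mul ((hecont.sub continuous_const).measurable.inv)
  have hQInt : IntervalIntegrable (fun θ:ℝ => F (Complex.exp (θ*Complex.I)) *
      Complex.exp (θ*Complex.I) / (Complex.exp (θ*Complex.I) - 1)) volume 0 (2*π) := by
    refine IntervalIntegrable.mono_fun'
      (g := fun θ => (K * (2/π) ^ (s-1)) * (θ ^ (s-1) + (2*π - θ) ^ (s-1)))
      ((bnd_integrable (by linarith)).const_mul _) hQmeas.aestronglyMeasurable ?_
    refine (ae_restrict_iff' measurableSet_uIoc).2 (ae_of_all _ (fun θ hθ => ?_))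
    rw [Set.uIoc_of_le (by positivity : (0:ℝ) ≤ 2*π)] at hθ
    have hmb := master_bound hs0 hα1 hK0 hb hmem hθ (le_refl (0:ℝ))
    simpa using hmb
  have hCPInt : IntervalIntegrable (fun θ:ℝ => (starRingEnd ℂ) (F (Complex.exp (θ*Complex.I))))
      volume 0 (2*π) := (Complex.continuous_conj.comp hFcont).intervalIntegrable _ _
  have hCQInt : IntervalIntegrable (fun θ:ℝ => (starRingEnd ℂ)
      (F (Complex.exp (θ*Complex.I)) * Complex.exp (θ*Complex.I) /
        (Complex.exp (θ*Complex.I) - 1))) volume 0 (2*π) := by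
    refine hQInt.mono_fun (Measurable.aestronglyMeasurable ?_) ?_
    · exact Complex.continuous_conj.measurable.comp hQmeas
    · exact ae_of_all _ (fun θ => le_of_eq (RCLike.norm_conj _))
  -- pointwise identities
  have hL : ∀ θ:ℝ, ((f (Complex.exp (θ*Complex.I)) : ℂ) -
      Complex.I * (g (Complex.exp (θ*Complex.I)) : ℂ)) =
      (starRingEnd ℂ) (F (Complex.exp (θ*Complex.I))) := by
    intro θ
    rw [hFσ _ (hmem θ)]
    simp only [map_add, map_mul, Complex.conj_ofReal, Complex.conj_I]
    ring
  have hR : ∀ θ:ℝ, (f (Complex.exp (θ*Complex.I)) : ℂ) / (Complex.exp (-(θ*Complex.I)) - 1) =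
      (-(1/2):ℂ) * ((F (Complex.exp (θ*Complex.I)) * Complex.exp (θ*Complex.I) /
          (Complex.exp (θ*Complex.I) - 1)) +
        (starRingEnd ℂ) (F (Complex.exp (θ*Complex.I))) -
        (starRingEnd ℂ) (F (Complex.exp (θ*Complex.I)) * Complex.exp (θ*Complex.I) /
          (Complex.exp (θ*Complex.I) - 1))) := by
    intro θ
    have hPθ : F (Complex.exp (θ*Complex.I)) =
        (f (Complex.exp (θ*Complex.I)) : ℂ) + Complex.I * (g (Complex.exp (θ*Complex.I)) : ℂ) :=
      hFσ _ (hmem θ)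
    have hconj_e : (starRingEnd ℂ) (Complex.exp (θ*Complex.I)) = Complex.exp (-(θ*Complex.I)) := by
      rw [← Complex.exp_conj]
      congr 1
      simp [map_mul, Complex.conj_ofReal, Complex.conj_I]
    have hinv : Complex.exp (-(θ*Complex.I)) = (Complex.exp (θ*Complex.I))⁻¹ := Complex.exp_neg _
    rcases eq_or_ne (Complex.exp (θ*Complex.I)) 1 with h1 | h1
    · rw [h1] at hPθ ⊢
      rw [hinv, h1]
      rw [hf1] at hPθ ⊢
      rw [hg1] at hPθ
      rw [hF1] at hPθ ⊢
      simp
    · set a : ℂ := (f (Complex.exp (θ*Complex.I)) : ℂ)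
      set b : ℂ := (g (Complex.exp (θ*Complex.I)) : ℂ)
      set σ : ℂ := Complex.exp (θ*Complex.I) with hσdef
      have hσ0 : σ ≠ 0 := Complex.exp_ne_zero _
      have hσ1 : σ - 1 ≠ 0 := sub_ne_zero.2 h1
      have h1σ : (1:ℂ) - σ ≠ 0 := sub_ne_zero.2 (Ne.symm h1)
      have hinv1 : σ⁻¹ - 1 ≠ 0 := by
        intro h
        rw [sub_eq_zero] at h
        exact h1 (by rw [← inv_inv σ, h, inv_one])
      have hca : (starRingEnd ℂ) a = a := Complex.conj_ofReal _
      have hcb : (starRingEnd ℂ) b = b := Complex.conj_ofReal _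
      have hconjP : (starRingEnd ℂ) (F σ) = a - Complex.I * b := by
        rw [hPθ]
        simp only [map_add, map_mul, hca, hcb, Complex.conj_I]
        ring
      have hconjQ : (starRingEnd ℂ) (F σ * σ / (σ - 1)) =
          (a - Complex.I * b) * σ⁻¹ / (σ⁻¹ - 1) := by
        rw [map_div₀, map_mul, hconjP, map_sub, map_one, hconj_e, hinv]
      rw [hinv, hconjQ, hconjP, hPθ]
      field_simp
      ring
  -- final assembly
  rw [intervalIntegral.integral_congr (fun θ _ => hL θ),
    intervalIntegral.integral_congr (fun θ _ => hR θ),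
    intervalIntegral.integral_const_mul,
    intervalIntegral.integral_sub (hQInt.add hCPInt) hCQInt,
    intervalIntegral.integral_add hQInt hCPInt,
    my_intervalIntegral_conj, my_intervalIntegral_conj, hQ0, map_zero]
  rw [zero_add, sub_zero]
  ring
end

section
/- Let f, g be real-valued C^α functions on the unit circle with f of zero mean and g(1)=0. Then f·T₁g + g·T₀f = T₁[f·g − (T₀f)(T₁g)], where T₀, T₁ are the Hilbert transforms normalized by zero mean and at 1 respectively. -/
open Complex Metric intervalIntegral
open scoped NNReal Real

lemma aux_const_of_re_zero (K : ℂ → ℂ)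
    (hc : ContinuousOn K (closedBall 0 1))
    (hd : DifferentiableOn ℂ K (ball 0 1))
    (hre : ∀ z ∈ sphere (0:ℂ) 1, (K z).re = 0) :
    ∀ z ∈ closedBall (0:ℂ) 1, K z = K 1 := by
  have hcl : closure (ball (0:ℂ) 1) = closedBall 0 1 := closure_ball 0 one_ne_zero
  have hfr : frontier (ball (0:ℂ) 1) = sphere 0 1 := frontier_ball 0 one_ne_zero
  have hdc : DiffContOnCl ℂ K (ball 0 1) := ⟨hd, hcl ▸ hc⟩
  -- Re K = 0 on the closed ball via maximum modulus applied to exp(±K)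
  have key : ∀ (L : ℂ → ℂ), DiffContOnCl ℂ L (ball 0 1) →
      (∀ z ∈ sphere (0:ℂ) 1, (L z).re = 0) →
      ∀ z ∈ closedBall (0:ℂ) 1, (L z).re ≤ 0 := by
    intro L hL hLre z hz
    have hexp : DiffContOnCl ℂ (Complex.exp ∘ L) (ball 0 1) :=
      Complex.differentiable_exp.comp_diffContOnCl hL
    have hb : ∀ w ∈ frontier (ball (0:ℂ) 1), ‖(Complex.exp ∘ L) w‖ ≤ 1 := by
      intro w hw
      rw [hfr] at hw
      simp [Complex.norm_exp, hLre w hw]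
    have hnorm := Complex.norm_le_of_forall_mem_frontier_norm_le isBounded_ball hexp hb
      (z := z) (hcl ▸ hz)
    have h1 : Real.exp ((L z).re) ≤ 1 := by
      simpa [Complex.norm_exp] using hnorm
    exact Real.exp_le_one_iff.mp h1
  have hre0 : ∀ z ∈ closedBall (0:ℂ) 1, (K z).re = 0 := by
    intro z hz
    have h1 := key K hdc hre z hz
    have h2 := key (fun w => -K w) hdc.neg (fun w hw => by simp [hre w hw]) z hz
    simp only [Complex.neg_re, neg_nonpos] at h2
    linarith
  -- exp ∘ K is constant on the ball by the maximum modulus principle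
  have hmax : IsMaxOn (norm ∘ (Complex.exp ∘ K)) (ball (0:ℂ) 1) 0 := by
    intro x hx
    simp only [Function.comp_apply, Complex.norm_exp, Set.mem_setOf_eq]
    rw [hre0 x (ball_subset_closedBall hx),
      hre0 0 (ball_subset_closedBall (mem_ball_self one_pos))]
  have heq : Set.EqOn (Complex.exp ∘ K) (Function.const ℂ ((Complex.exp ∘ K) 0)) (ball (0:ℂ) 1) :=
    Complex.eqOn_of_isPreconnected_of_isMaxOn_norm (convex_ball 0 1).isPreconnected
      isOpen_ball (hd.cexp) (mem_ball_self one_pos) hmax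
  -- hence deriv K = 0 on the ball
  have hfz : ∀ y ∈ ball (0:ℂ) 1, fderivWithin ℂ K (ball (0:ℂ) 1) y = 0 := by
    intro y hy
    have hdy : DifferentiableAt ℂ K y := hd.differentiableAt (isOpen_ball.mem_nhds hy)
    have h1 : HasDerivAt (fun w => Complex.exp (K w)) (Complex.exp (K y) * deriv K y) y :=
      hdy.hasDerivAt.cexp
    have h2 : HasDerivAt (fun w => Complex.exp (K w)) 0 y := by
      have hev : (fun w => Complex.exp (K w)) =ᶠ[nhds y] fun _ => (Complex.exp ∘ K) 0 :=
        Filter.eventually_of_mem (isOpen_ball.mem_nhds hy) (fun w hw => heq hw)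
      exact (hasDerivAt_const y _).congr_of_eventuallyEq hev
    have h3 : Complex.exp (K y) * deriv K y = 0 := h1.unique h2
    have h4 : deriv K y = 0 := (mul_eq_zero.mp h3).resolve_left (Complex.exp_ne_zero _)
    rw [fderivWithin_of_isOpen isOpen_ball hy]
    exact ContinuousLinearMap.ext_ring (by simp [fderiv_apply_one_eq_deriv, h4])
  -- K is constant on the ball, hence on the closed ball by continuity
  have hKball : Set.EqOn K (fun _ => K 0) (ball (0:ℂ) 1) := fun x hx =>
    (convex_ball 0 1).is_const_of_fderivWithin_eq_zero hd hfz hx (mem_ball_self one_pos)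
  have hKcb : Set.EqOn K (fun _ => K 0) (closedBall (0:ℂ) 1) :=
    hKball.of_subset_closure hc continuousOn_const ball_subset_closedBall (hcl ▸ subset_rfl)
  intro z hz
  rw [hKcb hz, hKcb (by simpa using mem_closedBall_self zero_le_one : (1:ℂ) ∈ closedBall (0:ℂ) 1)]

/-- with `f` of zero mean, `g(1)=0`, `f₀ = T₀f`, `g₁ = T₁g`, and `h` the
Hilbert transform normalized at `1` of `A := fg − (T₀f)(T₁g)` (i.e. `h(1)=0` and `A + ih`
extends holomorphically to the disc), one has `f·T₁g + g·T₀f = T₁[fg − (T₀f)(T₁g)]`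
on the unit circle. -/
theorem stmt_9 (α : ℝ≥0) (hα0 : 0 < α) (hα1 : (α : ℝ) < 1)
    (f g f₀ g₁ : ℂ → ℝ)
    (hf : ∃ C, HolderOnWith C α f (sphere (0:ℂ) 1))
    (hg : ∃ C, HolderOnWith C α g (sphere (0:ℂ) 1))
    (hf₀ : ∃ C, HolderOnWith C α f₀ (sphere (0:ℂ) 1))
    (hg₁ : ∃ C, HolderOnWith C α g₁ (sphere (0:ℂ) 1))
    (hfmean : (∫ θ in (0:ℝ)..(2 * π), f (Complex.exp (θ * Complex.I))) = 0)
    (hg1 : g 1 = 0)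
    (hf₀mean : (∫ θ in (0:ℝ)..(2 * π), f₀ (Complex.exp (θ * Complex.I))) = 0)
    (hf₀ext : ∃ F : ℂ → ℂ, ContinuousOn F (closedBall 0 1) ∧
      DifferentiableOn ℂ F (ball 0 1) ∧
      ∀ σ ∈ sphere (0:ℂ) 1, F σ = (f σ : ℂ) + Complex.I * (f₀ σ : ℂ))
    (hg₁1 : g₁ 1 = 0)
    (hg₁ext : ∃ F : ℂ → ℂ, ContinuousOn F (closedBall 0 1) ∧
      DifferentiableOn ℂ F (ball 0 1) ∧
      ∀ σ ∈ sphere (0:ℂ) 1, F σ = (g σ : ℂ) + Complex.I * (g₁ σ : ℂ))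
    (h : ℂ → ℝ)
    (hh : ∃ C, HolderOnWith C α h (sphere (0:ℂ) 1))
    (hh1 : h 1 = 0)
    (hhext : ∃ F : ℂ → ℂ, ContinuousOn F (closedBall 0 1) ∧
      DifferentiableOn ℂ F (ball 0 1) ∧
      ∀ σ ∈ sphere (0:ℂ) 1, F σ = ((f σ * g σ - f₀ σ * g₁ σ : ℝ) : ℂ) + Complex.I * (h σ : ℂ)) :
    ∀ σ ∈ sphere (0:ℂ) 1, f σ * g₁ σ + g σ * f₀ σ = h σ := by
  obtain ⟨F₁, hF₁c, hF₁d, hF₁b⟩ := hf₀ext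
  obtain ⟨F₂, hF₂c, hF₂d, hF₂b⟩ := hg₁ext
  obtain ⟨F₃, hF₃c, hF₃d, hF₃b⟩ := hhext
  set K : ℂ → ℂ := fun z => F₁ z * F₂ z - F₃ z with hK
  have hKc : ContinuousOn K (closedBall 0 1) := (hF₁c.mul hF₂c).sub hF₃c
  have hKd : DifferentiableOn ℂ K (ball 0 1) := (hF₁d.mul hF₂d).sub hF₃d
  have hone : (1:ℂ) ∈ sphere (0:ℂ) 1 := by simp
  have hbdry : ∀ σ ∈ sphere (0:ℂ) 1,
      K σ = Complex.I * ((f σ * g₁ σ + g σ * f₀ σ - h σ : ℝ) : ℂ) := by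
    intro σ hσ
    simp only [hK, hF₁b σ hσ, hF₂b σ hσ, hF₃b σ hσ]
    push_cast
    ring_nf
    simp [Complex.I_sq]
  have hre : ∀ σ ∈ sphere (0:ℂ) 1, (K σ).re = 0 := by
    intro σ hσ
    rw [hbdry σ hσ]
    simp
  have hconst := aux_const_of_re_zero K hKc hKd hre
  have hK1 : K 1 = 0 := by
    rw [hbdry 1 hone, hg1, hg₁1, hh1]
    push_cast
    ring
  intro σ hσ
  have hσcb : σ ∈ closedBall (0:ℂ) 1 := sphere_subset_closedBall hσ
  have h0 : K σ = 0 := (hconst σ hσcb).trans hK1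
  rw [hbdry σ hσ] at h0
  have him : (f σ * g₁ σ + g σ * f₀ σ - h σ : ℝ) = 0 := by
    have := congrArg Complex.im h0
    simpa using this
  linarith
end

section
/- Let g : Γ → ℂ^s be C^{1,δ} and a ∈ ℂ with a ≠ 0. If the function σ ↦ (a − σ·conj(a))·g(σ) extends holomorphically into D, then g itself extends holomorphically into D. -/
open Complex Metric
open scoped NNReal

/-- A function on the unit circle is of class `C^{1,δ}`: its pullback under
`θ ↦ e^{iθ}` is `C¹` with `δ`-Hölder derivative. -/
def C1HolderCircle (δ : ℝ≥0) {E : Type*} [NormedAddCommGroup E] [NormedSpace ℝ E]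
    (g : ℂ → E) : Prop :=
  ContDiff ℝ 1 (fun θ : ℝ => g (Complex.exp (θ * Complex.I))) ∧
  ∃ C, HolderWith C δ (deriv (fun θ : ℝ => g (Complex.exp (θ * Complex.I))))

open Filter
open scoped Topology

noncomputable def Complex.abs : AbsoluteValue ℂ ℝ := NormedField.toAbsoluteValue ℂ

lemma Complex.norm_eq_abs (z : ℂ) : ‖z‖ = Complex.abs z := rfl

lemma Complex.abs_apply (z : ℂ) : Complex.abs z = Real.sqrt (Complex.normSq z) := by
  rw [← Complex.norm_eq_abs, Complex.norm_def]

lemma Complex.abs_conj (z : ℂ) : Complex.abs ((starRingEnd ℂ) z) = Complex.abs z := by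
  rw [← Complex.norm_eq_abs, ← Complex.norm_eq_abs, Complex.norm_conj]

lemma Complex.abs_two : Complex.abs 2 = 2 := by
  rw [← Complex.norm_eq_abs]; norm_num

lemma Complex.continuous_abs : Continuous Complex.abs := continuous_norm

lemma Complex.abs_ofReal (r : ℝ) : Complex.abs (r : ℂ) = |r| := by
  rw [← Complex.norm_eq_abs, Complex.norm_real, Real.norm_eq_abs]

lemma Complex.sq_abs (z : ℂ) : Complex.abs z ^ 2 = Complex.normSq z := Complex.sq_norm z

lemma Complex.abs_mul_exp_arg_mul_I (z : ℂ) :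
    ((Complex.abs z : ℝ) : ℂ) * Complex.exp (Complex.arg z * Complex.I) = z :=
  Complex.norm_mul_exp_arg_mul_I z

lemma Complex.re_le_abs (z : ℂ) : z.re ≤ Complex.abs z := Complex.re_le_norm z

lemma sphere_param {E : Type*} [NormedAddCommGroup E] (g : ℂ → E)
    {p : ℂ} (hp : Complex.abs p = 1) {z : ℂ} (hz : Complex.abs z = 1) :
    g z = (fun θ : ℝ => g (Complex.exp (θ * Complex.I)))
      (Complex.arg p + Complex.arg (z * (starRingEnd ℂ) p)) := by
  have habs : Complex.abs (z * (starRingEnd ℂ) p) = 1 := by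
    rw [map_mul, Complex.abs_conj, hp, hz, one_mul]
  have h1 : Complex.exp ((↑(Complex.arg p + Complex.arg (z * (starRingEnd ℂ) p)) : ℂ) * I) = z := by
    push_cast
    rw [add_mul, Complex.exp_add]
    have e1 : Complex.exp (↑(Complex.arg p) * I) = p := by
      conv_rhs => rw [← Complex.abs_mul_exp_arg_mul_I p]
      rw [hp]; simp
    have e2 : Complex.exp (↑(Complex.arg (z * (starRingEnd ℂ) p)) * I) = z * (starRingEnd ℂ) p := by
      conv_rhs => rw [← Complex.abs_mul_exp_arg_mul_I (z * (starRingEnd ℂ) p)]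
      rw [habs]; simp
    rw [e1, e2]
    have hn : Complex.normSq p = 1 := by
      rw [← Complex.sq_abs, hp]; norm_num
    calc p * (z * (starRingEnd ℂ) p) = z * (p * (starRingEnd ℂ) p) := by ring
    _ = z * Complex.normSq p := by rw [Complex.mul_conj]
    _ = z := by rw [hn]; simp
  conv_lhs => rw [← h1]

lemma g_cwa {E : Type*} [NormedAddCommGroup E] (g : ℂ → E)
    (hg : Continuous (fun θ : ℝ => g (Complex.exp (θ * Complex.I))))
    {p : ℂ} (hp : Complex.abs p = 1) :
    ContinuousWithinAt g (sphere (0:ℂ) 1) p := by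
  set pull := fun θ : ℝ => g (Complex.exp (θ * Complex.I)) with hpull
  set φ : ℂ → ℝ := fun z => Complex.arg p + Complex.arg (z * (starRingEnd ℂ) p) with hφ
  have hφc : ContinuousAt φ p := by
    apply ContinuousAt.add continuousAt_const
    have h1 : p * (starRingEnd ℂ) p = (Complex.normSq p : ℂ) := Complex.mul_conj p
    have hn : Complex.normSq p = 1 := by rw [← Complex.sq_abs, hp]; norm_num
    have hmem : p * (starRingEnd ℂ) p ∈ Complex.slitPlane := by
      rw [h1, hn]; exact Complex.one_mem_slitPlane
    have hmul : ContinuousAt (fun z : ℂ => z * (starRingEnd ℂ) p) p :=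
      (continuous_id.mul continuous_const).continuousAt
    exact ContinuousAt.comp (g := Complex.arg) (Complex.continuousAt_arg hmem) hmul
  have hcomp : ContinuousAt (pull ∘ φ) p := hg.continuousAt.comp hφc
  refine hcomp.continuousWithinAt.congr ?_ ?_
  · intro y hy
    have hy1 : Complex.abs y = 1 := by
      rwa [mem_sphere_zero_iff_norm, Complex.norm_eq_abs] at hy
    exact sphere_param g hp hy1
  · exact sphere_param g hp hp

lemma g_bdd {E : Type*} [NormedAddCommGroup E] (g : ℂ → E)
    (hg : Continuous (fun θ : ℝ => g (Complex.exp (θ * Complex.I))))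
    {p : ℂ} (hp : Complex.abs p = 1) :
    ∃ B : ℝ, ∀ σ ∈ sphere (0:ℂ) 1, ‖g σ‖ ≤ B := by
  set pull := fun θ : ℝ => g (Complex.exp (θ * Complex.I)) with hpull
  obtain ⟨B, hB⟩ := (isCompact_Icc (a := Complex.arg p - Real.pi)
    (b := Complex.arg p + Real.pi)).exists_bound_of_continuousOn
    (f := fun θ => pull θ) hg.continuousOn
  refine ⟨B, fun σ hσ => ?_⟩
  have hσ1 : Complex.abs σ = 1 := by
    rwa [mem_sphere_zero_iff_norm, Complex.norm_eq_abs] at hσ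
  rw [sphere_param g hp hσ1]
  refine hB _ ?_
  constructor
  · have := Complex.neg_pi_lt_arg (σ * (starRingEnd ℂ) p)
    linarith
  · have := Complex.arg_le_pi (σ * (starRingEnd ℂ) p)
    linarith

-- basic denominator estimates
lemma den_est {p : ℂ} (hp : Complex.abs p = 1) {t : ℝ} (ht : 0 < t)
    {z : ℂ} (hz : z ∈ closedBall (0:ℂ) 1) :
    Complex.abs (p - z) ≤ Complex.abs (p - z + t * p) ∧
      t ≤ Complex.abs (p - z + t * p) := by
  have hn : Complex.normSq p = 1 := by rw [← Complex.sq_abs, hp]; norm_num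
  have hcp : (starRingEnd ℂ) p * p = 1 := by
    rw [mul_comm, Complex.mul_conj, hn]; simp
  set u := (starRingEnd ℂ) p * (p - z) with hu
  have hre : 0 ≤ u.re := by
    have h1 : u = 1 - (starRingEnd ℂ) p * z := by
      rw [hu, mul_sub, hcp]
    have h2 : u.re = 1 - ((starRingEnd ℂ) p * z).re := by
      rw [h1]; simp
    have h3 : ((starRingEnd ℂ) p * z).re ≤ 1 := by
      refine le_trans (Complex.re_le_abs _) ?_
      rw [map_mul, Complex.abs_conj, hp, one_mul]
      rwa [mem_closedBall_zero_iff, Complex.norm_eq_abs] at hz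
    linarith
  have key : (starRingEnd ℂ) p * (p - z + t * p) = u + t := by
    rw [hu, mul_add, mul_sub]
    have : (starRingEnd ℂ) p * ((t:ℂ) * p) = t := by
      rw [mul_comm ((t:ℂ)) p, ← mul_assoc, hcp, one_mul]
    rw [this]
  have habs1 : Complex.abs (p - z + t * p) = Complex.abs (u + t) := by
    rw [← key, map_mul, Complex.abs_conj, hp, one_mul]
  have habs2 : Complex.abs (p - z) = Complex.abs u := by
    rw [hu, map_mul, Complex.abs_conj, hp, one_mul]
  have hsq : Complex.normSq (u + t) = Complex.normSq u + 2 * t * u.re + t ^ 2 := by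
    simp [Complex.normSq_apply]; ring
  constructor
  · rw [habs1, habs2, Complex.abs_apply, Complex.abs_apply]
    apply Real.sqrt_le_sqrt
    rw [hsq]; nlinarith
  · rw [habs1, Complex.abs_apply]
    have h4 : t = Real.sqrt (t ^ 2) := by rw [Real.sqrt_sq ht.le]
    conv_lhs => rw [h4]
    apply Real.sqrt_le_sqrt
    rw [hsq]
    nlinarith [Complex.normSq_nonneg u]

lemma add_lt_two {p σ : ℂ} (hp : Complex.abs p = 1) (hσ : Complex.abs σ = 1)
    (hne : σ ≠ p) : Complex.abs (p + σ) < 2 := by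
  have hnp : Complex.normSq p = 1 := by rw [← Complex.sq_abs, hp]; norm_num
  have hnσ : Complex.normSq σ = 1 := by rw [← Complex.sq_abs, hσ]; norm_num
  set w := p * (starRingEnd ℂ) σ with hw
  have hwa : Complex.abs w = 1 := by rw [hw, map_mul, Complex.abs_conj, hp, hσ, one_mul]
  have hw1 : w ≠ 1 := by
    intro h
    apply hne
    have : p * ((starRingEnd ℂ) σ * σ) = σ := by
      rw [← mul_assoc, ← hw, h, one_mul]
    rw [mul_comm ((starRingEnd ℂ) σ) σ, Complex.mul_conj, hnσ] at this
    simpa using this.symm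
  have hre : w.re < 1 := by
    rcases lt_or_eq_of_le (le_trans (Complex.re_le_abs w) hwa.le) with h | h
    · exact h
    · exfalso
      apply hw1
      have him : w.im = 0 := by
        have : Complex.normSq w = 1 := by rw [← Complex.sq_abs, hwa]; norm_num
        rw [Complex.normSq_apply, h] at this
        nlinarith
      apply Complex.ext <;> simp [h, him]
  have hsq : Complex.abs (p + σ) ^ 2 = 2 + 2 * w.re := by
    rw [Complex.sq_abs, Complex.normSq_add, hnp, hnσ, ← hw]
    ring
  nlinarith [Complex.abs.nonneg (p + σ)]

lemma core_tendsto (p : ℂ) (hp : Complex.abs p = 1) (h : ℂ → ℂ)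
    (hc : ContinuousOn h (closedBall 0 1)) (hd : DifferentiableOn ℂ h (ball 0 1))
    (c : ℂ) (q : ℂ → ℂ)
    (hq : ∀ σ ∈ sphere (0:ℂ) 1, h σ = (p - σ) * q σ)
    (hqc : ContinuousWithinAt q (sphere (0:ℂ) 1) p) (hqp : q p = c)
    (B : ℝ) (hB : ∀ σ ∈ sphere (0:ℂ) 1, ‖q σ - c‖ ≤ B) :
    Tendsto (fun z => h z / (p - z)) (𝓝[closedBall (0:ℂ) 1 \ {p}] p) (𝓝 c) := by
  have hpS : p ∈ sphere (0:ℂ) 1 := by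
    rw [mem_sphere_zero_iff_norm, Complex.norm_eq_abs, hp]
  have hB0 : 0 ≤ B := le_trans (norm_nonneg _) (hB p hpS)
  rw [Metric.tendsto_nhdsWithin_nhds]
  intro ε hε
  set η := ε / 4 with hη
  have hη0 : 0 < η := by positivity
  -- step 1 : small arc
  obtain ⟨r₀, hr₀, hr⟩ := Metric.continuousWithinAt_iff.1 hqc η hη0
  set r := min r₀ 1 with hrdef
  have hr0 : 0 < r := lt_min hr₀ one_pos
  have hr1 : r ≤ 1 := min_le_right _ _
  have harc : ∀ σ ∈ sphere (0:ℂ) 1, dist σ p < r → ‖q σ - c‖ ≤ η := by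
    intro σ hσ hd
    have := hr hσ (lt_of_lt_of_le hd (min_le_left _ _))
    rw [hqp] at this
    rw [← dist_eq_norm]
    exact this.le
  -- step 2 : rho < 1 on the far part of the sphere
  set K : Set ℂ := sphere (0:ℂ) 1 ∩ {σ | r ≤ dist σ p} with hK
  have hKc : IsCompact K :=
    (isCompact_sphere _ _).inter_right (isClosed_le continuous_const (continuous_id.dist continuous_const))
  have hKne : K.Nonempty := by
    refine ⟨-p, ?_, ?_⟩
    · rw [mem_sphere_zero_iff_norm, norm_neg, Complex.norm_eq_abs, hp]
    · show r ≤ dist (-p) p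
      rw [dist_eq_norm]
      have : -p - p = -(2 * p) := by ring
      rw [this, norm_neg, norm_mul, Complex.norm_eq_abs, Complex.norm_eq_abs, hp]
      simp only [Complex.abs_two]
      linarith
  obtain ⟨σ₀, hσ₀K, hσ₀max'⟩ := hKc.exists_isMaxOn hKne
    ((Complex.continuous_abs.comp (continuous_const.add continuous_id)).continuousOn)
  have hσ₀max : ∀ σ ∈ K, Complex.abs (p + σ) ≤ Complex.abs (p + σ₀) := fun σ hσ => hσ₀max' hσ
  set ρ := Complex.abs (p + σ₀) / 2 with hρ
  have hρ0 : 0 ≤ ρ := by positivity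
  have hρ1 : ρ < 1 := by
    have hσ₀s : Complex.abs σ₀ = 1 := by
      have := hσ₀K.1
      rwa [mem_sphere_zero_iff_norm, Complex.norm_eq_abs] at this
    have hσ₀ne : σ₀ ≠ p := by
      intro hcon
      have := hσ₀K.2
      rw [hcon] at this
      simp only [Set.mem_setOf_eq, dist_self] at this
      linarith
    have := add_lt_two hp hσ₀s hσ₀ne
    rw [hρ]; linarith
  -- step 3 : choose k
  obtain ⟨k, hk⟩ := exists_pow_lt_of_lt_one (x := η / (B + 1)) (by positivity) hρ1
  have hBρ : B * ρ ^ k ≤ η := by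
    have h1 : B * ρ ^ k ≤ (B + 1) * ρ ^ k := by
      apply mul_le_mul_of_nonneg_right (by linarith) (pow_nonneg hρ0 _)
    have h2 : (B + 1) * ρ ^ k < (B + 1) * (η / (B + 1)) :=
      mul_lt_mul_of_pos_left hk (by linarith)
    have h3 : (B + 1) * (η / (B + 1)) = η := by field_simp
    linarith
  set v : ℂ → ℂ := fun z => ((p + z) / 2) ^ k with hv
  have hv1 : ∀ z ∈ closedBall (0:ℂ) 1, Complex.abs (v z) ≤ 1 := by
    intro z hz
    rw [hv]
    simp only [map_pow, map_div₀, Complex.abs_two]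
    apply pow_le_one₀ (by positivity)
    rw [div_le_one (by norm_num)]
    have : Complex.abs z ≤ 1 := by
      rwa [mem_closedBall_zero_iff, Complex.norm_eq_abs] at hz
    calc Complex.abs (p + z) ≤ Complex.abs p + Complex.abs z := Complex.abs.add_le _ _
    _ ≤ 2 := by rw [hp]; linarith
  have hvK : ∀ σ ∈ K, Complex.abs (v σ) ≤ ρ ^ k := by
    intro σ hσ
    rw [hv]
    simp only [map_pow, map_div₀, Complex.abs_two]
    exact pow_le_pow_left₀ (by positivity) (by rw [hρ]; linarith [hσ₀max σ hσ]) k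
  -- the function W
  set W : ℂ → ℂ := fun z => h z - c * (p - z) with hW
  have hWc : ContinuousOn W (closedBall (0:ℂ) 1) :=
    hc.sub ((continuous_const.mul (continuous_const.sub continuous_id)).continuousOn)
  have hWd : DifferentiableOn ℂ W (ball (0:ℂ) 1) :=
    hd.sub ((differentiable_const c |>.mul ((differentiable_const p).sub differentiable_id)).differentiableOn)
  -- step 4 : maximum principle for each t > 0
  have hmax : ∀ t : ℝ, 0 < t → ∀ z ∈ closedBall (0:ℂ) 1,
      ‖W z * v z / (p - z + t * p)‖ ≤ η := by
    intro t ht z hz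
    set F : ℂ → ℂ := fun z => W z * v z / (p - z + t * p) with hF
    have hden : ∀ w ∈ closedBall (0:ℂ) 1, p - w + t * p ≠ 0 := by
      intro w hw hcon
      have := (den_est hp ht hw).2
      rw [hcon] at this
      simp at this
      linarith
    have hFd : DiffContOnCl ℂ F (ball 0 1) := by
      constructor
      · apply DifferentiableOn.div
        · exact hWd.mul ((((differentiable_const p).add differentiable_id).div_const 2).pow k).differentiableOn
        · exact (((differentiable_const p).sub differentiable_id).add
            ((differentiable_const ((t:ℂ))).mul (differentiable_const p))).differentiableOn
        · intro w hw
          exact hden w (ball_subset_closedBall hw)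
      · rw [closure_ball (0:ℂ) one_ne_zero]
        apply ContinuousOn.div
        · exact hWc.mul ((((continuous_const.add continuous_id).div_const 2).pow k).continuousOn)
        · exact (((continuous_const.sub continuous_id).add
            (continuous_const.mul continuous_const)).continuousOn)
        · exact hden
    have hfront : ∀ σ ∈ frontier (ball (0:ℂ) 1), ‖F σ‖ ≤ η := by
      rw [frontier_ball (0:ℂ) one_ne_zero]
      intro σ hσ
      have hσcb : σ ∈ closedBall (0:ℂ) 1 := sphere_subset_closedBall hσ
      have hWσ : W σ = (p - σ) * (q σ - c) := by
        rw [hW]; dsimp only; rw [hq σ hσ]; ring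
      have hFσ : ‖F σ‖ = Complex.abs (p - σ) * ‖q σ - c‖ * Complex.abs (v σ) /
          Complex.abs (p - σ + t * p) := by
        rw [hF]
        dsimp only
        rw [hWσ]
        simp only [norm_div, norm_mul, Complex.norm_eq_abs, map_mul]
      have hd1 : Complex.abs (p - σ) ≤ Complex.abs (p - σ + t * p) := (den_est hp ht hσcb).1
      have hd2 : 0 < Complex.abs (p - σ + t * p) := lt_of_lt_of_le ht (den_est hp ht hσcb).2
      have hqη : ‖q σ - c‖ * Complex.abs (v σ) ≤ η := by
        by_cases hcase : dist σ p < r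
        · have h1 : ‖q σ - c‖ * Complex.abs (v σ) ≤ η * 1 :=
            mul_le_mul (harc σ hσ hcase) (hv1 σ hσcb) (Complex.abs.nonneg _) hη0.le
          linarith
        · have hσK : σ ∈ K := ⟨hσ, by simpa using not_lt.1 hcase⟩
          have h1 : ‖q σ - c‖ * Complex.abs (v σ) ≤ B * ρ ^ k :=
            mul_le_mul (hB σ hσ) (hvK σ hσK) (Complex.abs.nonneg _) hB0
          linarith
      rw [hFσ]
      rw [div_le_iff₀ hd2]
      have h2 : (‖q σ - c‖ * Complex.abs (v σ)) * Complex.abs (p - σ)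
          ≤ η * Complex.abs (p - σ + t * p) :=
        mul_le_mul hqη hd1 (Complex.abs.nonneg _) hη0.le
      nlinarith [Complex.abs.nonneg (p - σ), Complex.abs.nonneg (v σ), norm_nonneg (q σ - c)]
    have := Complex.norm_le_of_forall_mem_frontier_norm_le (isBounded_ball) hFd hfront
      (z := z) (by rwa [closure_ball (0:ℂ) one_ne_zero])
    exact this
  -- step 5 : let t → 0
  have hkey : ∀ z ∈ closedBall (0:ℂ) 1, z ≠ p →
      ‖h z / (p - z) - c‖ * Complex.abs (v z) ≤ η := by
    intro z hz hzp
    have hpz : p - z ≠ 0 := sub_ne_zero.2 (Ne.symm hzp)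
    have hpz' : 0 < Complex.abs (p - z) := by
      rwa [Complex.abs.pos_iff]
    have hWv : ‖W z * v z‖ ≤ η * Complex.abs (p - z) := by
      apply le_of_forall_pos_le_add
      intro s hs
      set t : ℝ := s / η with htdef
      have ht : (0:ℝ) < t := by positivity
      have h1 := hmax t ht z hz
      rw [norm_div] at h1
      have hd2 : 0 < Complex.abs (p - z + (t : ℂ) * p) :=
        lt_of_lt_of_le ht (den_est hp ht hz).2
      rw [div_le_iff₀ (by rwa [Complex.norm_eq_abs])] at h1
      have htri : Complex.abs (p - z + (t : ℂ) * p) ≤ Complex.abs (p - z) + t := by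
        have t1 : Complex.abs (p - z + (t : ℂ) * p)
            ≤ Complex.abs (p - z) + Complex.abs ((t : ℂ) * p) :=
          Complex.abs.add_le _ _
        have t2 : Complex.abs ((t : ℂ) * p) = t := by
          rw [map_mul, hp, mul_one, Complex.abs_ofReal, abs_of_pos ht]
        linarith
      have h2 : ‖W z * v z‖ ≤ η * Complex.abs (p - z + (t : ℂ) * p) := by
        rwa [Complex.norm_eq_abs] at h1 ⊢
      have h3 : η * t = s := by rw [htdef]; field_simp
      nlinarith
    have heq : h z / (p - z) - c = W z / (p - z) := by
      rw [hW]; field_simp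
    rw [heq, ← Complex.norm_eq_abs, ← norm_mul, div_mul_eq_mul_div]
    rw [norm_div]
    rw [div_le_iff₀ (by rwa [Complex.norm_eq_abs])]
    rwa [Complex.norm_eq_abs]
  -- step 6 : conclude
  have hv_cont : Tendsto (fun z => Complex.abs (v z)) (𝓝 p) (𝓝 1) := by
    have hcont : Continuous fun z : ℂ => Complex.abs (v z) :=
      Complex.continuous_abs.comp (((continuous_const.add continuous_id).div_const 2).pow k)
    have hval : Complex.abs (v p) = 1 := by
      rw [hv]
      dsimp only
      rw [show (p + p) / 2 = p from by ring, map_pow, hp, one_pow]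
    have := hcont.tendsto p
    rwa [hval] at this
  obtain ⟨δ, hδ0, hδ⟩ := Metric.eventually_nhds_iff.1
    (Metric.tendsto_nhds.1 hv_cont (1/2) (by norm_num))
  refine ⟨δ, hδ0, ?_⟩
  intro x hx hxd
  have hx1 : x ∈ closedBall (0:ℂ) 1 := hx.1
  have hx2 : x ≠ p := by
    intro hcon; exact hx.2 (by rw [hcon]; exact Set.mem_singleton p)
  have hkx := hkey x hx1 hx2
  have hvx : 1/2 < Complex.abs (v x) := by
    have := hδ hxd
    rw [Real.dist_eq] at this
    have := abs_lt.1 this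
    linarith [this.1]
  have hnn : 0 ≤ ‖h x / (p - x) - c‖ := norm_nonneg _
  have hfin : ‖h x / (p - x) - c‖ ≤ 2 * η := by nlinarith
  rw [dist_eq_norm]
  rw [hη] at hfin
  linarith

/-- if `a ≠ 0` and `σ ↦ (a − σ·conj a)·g(σ)` extends holomorphically into
the disc, then `g` itself extends holomorphically into the disc. -/
theorem stmt_11 (s : ℕ) (hs : 0 < s) (δ : ℝ≥0) (hδ0 : 0 < δ) (hδ1 : (δ : ℝ) < 1)
    (g : ℂ → Fin s → ℂ) (hg : C1HolderCircle δ g) (a : ℂ) (ha : a ≠ 0)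
    (hext : ∃ H : ℂ → Fin s → ℂ, ContinuousOn H (closedBall 0 1) ∧
      DifferentiableOn ℂ H (ball 0 1) ∧
      ∀ σ ∈ sphere (0:ℂ) 1, H σ = fun j => (a - σ * (starRingEnd ℂ) a) * g σ j) :
    ∃ G : ℂ → Fin s → ℂ, ContinuousOn G (closedBall 0 1) ∧
      DifferentiableOn ℂ G (ball 0 1) ∧
      ∀ σ ∈ sphere (0:ℂ) 1, G σ = g σ := by
  obtain ⟨H, hHc, hHd, hHb⟩ := hext
  have hca : (starRingEnd ℂ) a ≠ 0 := by
    simpa using ha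
  set p : ℂ := a / (starRingEnd ℂ) a with hpdef
  have hp : Complex.abs p = 1 := by
    rw [hpdef, map_div₀, Complex.abs_conj, div_self (Complex.abs.ne_zero ha)]
  have hpS : p ∈ sphere (0:ℂ) 1 := by
    rw [mem_sphere_zero_iff_norm, Complex.norm_eq_abs, hp]
  have hfact : ∀ z : ℂ, a - z * (starRingEnd ℂ) a = (starRingEnd ℂ) a * (p - z) := by
    intro z
    rw [hpdef, mul_sub, mul_div_cancel₀ _ hca]
    ring
  have hpball : p ∉ ball (0:ℂ) 1 := by
    rw [mem_ball_zero_iff, Complex.norm_eq_abs, hp]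
    exact lt_irrefl 1
  -- componentwise data
  have hHcj : ∀ j, ContinuousOn (fun z => H z j) (closedBall (0:ℂ) 1) :=
    fun j => (continuousOn_pi.1 hHc) j
  have hHdj : ∀ j, DifferentiableOn ℂ (fun z => H z j) (ball (0:ℂ) 1) :=
    fun j => (differentiableOn_pi.1 hHd) j
  -- continuity of g on the sphere
  have hgcont : Continuous (fun θ : ℝ => g (Complex.exp (θ * Complex.I))) := hg.1.continuous
  have hgcwa : ContinuousWithinAt g (sphere (0:ℂ) 1) p := g_cwa g hgcont hp
  obtain ⟨B, hgB⟩ := g_bdd g hgcont hp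
  -- definition of G
  set G : ℂ → Fin s → ℂ :=
    fun z j => if z = p then g p j else (H z j / (starRingEnd ℂ) a) / (p - z) with hG
  have hGbd : ∀ σ ∈ sphere (0:ℂ) 1, G σ = g σ := by
    intro σ hσ
    funext j
    rw [hG]
    dsimp only
    by_cases hcase : σ = p
    · rw [if_pos hcase, hcase]
    · rw [if_neg hcase]
      have hpσ : p - σ ≠ 0 := sub_ne_zero.2 (Ne.symm hcase)
      have hHσj : H σ j = (a - σ * (starRingEnd ℂ) a) * g σ j := by rw [hHb σ hσ]
      rw [hHσj, hfact σ]
      field_simp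
      try ring
  -- the core tendsto, for each component
  have hcore : ∀ j, Filter.Tendsto (fun z => (H z j / (starRingEnd ℂ) a) / (p - z))
      (nhdsWithin p (closedBall (0:ℂ) 1 \ {p})) (nhds (g p j)) := by
    intro j
    apply core_tendsto p hp (fun z => H z j / (starRingEnd ℂ) a)
      ((hHcj j).div_const _) ((hHdj j).div_const _) (g p j) (fun σ => g σ j)
      ?_ ?_ rfl (B + ‖g p j‖) ?_
    · intro σ hσ
      have hHσj : H σ j = (a - σ * (starRingEnd ℂ) a) * g σ j := by rw [hHb σ hσ]
      rw [hHσj, hfact σ]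
      field_simp
      try ring
    · exact (ContinuousAt.comp_continuousWithinAt ((continuous_apply j).continuousAt) hgcwa)
    · intro σ hσ
      have h1 : ‖g σ j‖ ≤ ‖g σ‖ := norm_le_pi_norm (g σ) j
      have h2 := norm_sub_le (g σ j) (g p j)
      have h3 := hgB σ hσ
      linarith
  refine ⟨G, ?_, ?_, hGbd⟩
  · -- continuity on the closed ball
    rw [continuousOn_pi]
    intro j z hz
    by_cases hzp : z = p
    · rw [hzp, ← continuousWithinAt_diff_self]
      have htd : Filter.Tendsto (fun x => G x j)
          (nhdsWithin p (closedBall (0:ℂ) 1 \ {p})) (nhds (g p j)) := by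
        apply (hcore j).congr'
        filter_upwards [self_mem_nhdsWithin] with w hw
        rw [hG]
        dsimp only
        rw [if_neg (show w ≠ p by simpa using hw.2)]
      unfold ContinuousWithinAt
      convert htd using 2
      rw [hG]
      dsimp only
      rw [if_pos rfl]
    · -- away from p
      have hwc : ContinuousWithinAt (fun w => (H w j / (starRingEnd ℂ) a) / (p - w))
          (closedBall (0:ℂ) 1) z := by
        apply ContinuousWithinAt.div
        · exact ((hHcj j) z hz).div_const _
        · exact (continuousWithinAt_const.sub continuousWithinAt_id)
        · exact sub_ne_zero.2 (Ne.symm hzp)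
      have hev : (fun w => G w j) =ᶠ[nhdsWithin z (closedBall (0:ℂ) 1)]
          (fun w => (H w j / (starRingEnd ℂ) a) / (p - w)) := by
        apply Filter.EventuallyEq.filter_mono ?_ nhdsWithin_le_nhds
        filter_upwards [eventually_ne_nhds hzp] with w hw
        rw [hG]
        dsimp only
        rw [if_neg hw]
      refine hwc.congr_of_eventuallyEq hev ?_
      rw [hG]
      dsimp only
      rw [if_neg hzp]
  · -- differentiability on the open ball
    rw [differentiableOn_pi]
    intro j
    have hdiv : DifferentiableOn ℂ (fun w => (H w j / (starRingEnd ℂ) a) / (p - w))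
        (ball (0:ℂ) 1) := by
      apply DifferentiableOn.div ((hHdj j).div_const _)
      · exact ((differentiable_const p).sub differentiable_id).differentiableOn
      · intro w hw
        refine sub_ne_zero.2 ?_
        intro hcon
        exact hpball (hcon ▸ hw)
    apply hdiv.congr
    intro w hw
    have hwp : w ≠ p := by
      intro hcon
      exact hpball (hcon ▸ hw)
    rw [hG]
    dsimp only
    rw [if_neg hwp]
end
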